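/- arXiv:1611.01570 — 9 statements merged into one kernel-verified Lean document; each statement's English description precedes it below -/
import Mathlib

section
/- Let R be an integral domain and let F be its field of fractions. Then for every natural number n ≥ 1, N_n(R) = N_n(F); that is, the minimum cardinality of A+A over n-element subsets A of the squares of R equals the minimum cardinality of A+A over n-element subsets of the squares of F. -/
open Pointwise

/-- `sqSumsetMin R n` is the infimum of `|A + A|` over all `n`-element subsets `A` of the
set of squares `S(R) = {a^2 : a ∈ R}` of the ring `R`. -/
noncomputable def sqSumsetMin (R : Type*) [CommRing R] [DecidableEq R] (n : ℕ) : ℕ :=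
  sInf {k | ∃ A : Finset R, (∀ a ∈ A, IsSquare a) ∧ A.card = n ∧ (A + A).card = k}

/-- For an integral domain `R` with field of fractions `F`, `N_n(R) = N_n(F)` for all `n ≥ 1`. -/
theorem sqSumsetMin_fractionRing_eq (R : Type*) [CommRing R] [IsDomain R] [DecidableEq R]
    (F : Type*) [Field F] [DecidableEq F] [Algebra R F] [IsFractionRing R F]
    (n : ℕ) (hn : 1 ≤ n) :
    sqSumsetMin R n = sqSumsetMin F n := by
  unfold sqSumsetMin
  have hinj : Function.Injective (algebraMap R F) := IsFractionRing.injective R F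
  congr 1
  ext k
  constructor
  · rintro ⟨A, hsq, hcard, hsum⟩
    refine ⟨A.image (algebraMap R F), ?_, ?_, ?_⟩
    · intro a ha
      obtain ⟨x, hx, rfl⟩ := Finset.mem_image.mp ha
      exact (hsq x hx).map (algebraMap R F)
    · rw [Finset.card_image_of_injective _ hinj]; exact hcard
    · rw [← Finset.image_add, Finset.card_image_of_injective _ hinj]; exact hsum
  · rintro ⟨A, hsq, hcard, hsum⟩
    choose r hr using hsq
    obtain ⟨d, hd⟩ := IsLocalization.exist_integer_multiples_of_finset (nonZeroDivisors R)
      (A.attach.image (fun x : {a : F // a ∈ A} => r x.1 x.2))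
    have hd' : ∀ x : {a : F // a ∈ A}, IsLocalization.IsInteger R ((d : R) • r x.1 x.2) := fun x =>
      hd _ (Finset.mem_image.mpr ⟨x, Finset.mem_attach _ _, rfl⟩)
    choose e he using hd'
    set c : F := algebraMap R F d with hc
    have hc0 : c ≠ 0 :=
      IsFractionRing.to_map_ne_zero_of_mem_nonZeroDivisors d.2
    set m : F →+ F := AddMonoidHom.mulLeft (c * c) with hm
    have hmval : ∀ x : F, m x = (c * c) * x := fun x => rfl
    have hminj : Function.Injective m := fun x y h => by
      simp only [hmval] at h
      exact mul_left_cancel₀ (mul_ne_zero hc0 hc0) h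
    set B : Finset R := A.attach.image (fun x => e x * e x) with hB
    have step : ∀ x : {a : F // a ∈ A}, algebraMap R F (e x * e x) = m x.1 := by
      intro x
      rw [map_mul, he x, hmval, Algebra.smul_def, ← hc]
      linear_combination (c * c) * (hr x.1 x.2).symm
    have key : B.image (algebraMap R F) = A.image m := by
      rw [hB, Finset.image_image]
      calc A.attach.image ((algebraMap R F) ∘ fun x => e x * e x)
          = A.attach.image (fun x => m x.1) := Finset.image_congr (fun x _ => step x)
        _ = (A.attach.image Subtype.val).image m := by rw [Finset.image_image]; rfl
        _ = A.image m := by rw [Finset.attach_image_val]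
    refine ⟨B, ?_, ?_, ?_⟩
    · intro a ha
      obtain ⟨x, _, rfl⟩ := Finset.mem_image.mp ha
      exact ⟨e x, rfl⟩
    · rw [← Finset.card_image_of_injective B hinj, key,
        Finset.card_image_of_injective _ hminj, hcard]
    · rw [← Finset.card_image_of_injective (B + B) hinj, Finset.image_add, key,
        ← Finset.image_add, Finset.card_image_of_injective _ hminj, hsum]
end

section
/- Let d, x, y be rational numbers with y ≠ 0 and y^2 = x^3 - d^2·x (so (x,y) is a rational point on the elliptic curve E_d : y^2 = x^3 - d^2 x). Set a = (x^2 - 2dx - d^2)/(2y), b = (x^2 + d^2)/(2y), and c = (-x^2 - 2dx + d^2)/(2y). Then b^2 - a^2 = d and c^2 - b^2 = d; in particular {a^2, b^2, c^2} is an arithmetic progression of length 3 in ℚ with common difference d. -/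
/-- If `(x, y)` with `y ≠ 0` is a rational point on the elliptic curve
`E_d : y² = x³ - d²·x`, then with `a = (x² - 2dx - d²)/(2y)`, `b = (x² + d²)/(2y)` and
`c = (-x² - 2dx + d²)/(2y)`, the triple `{a², b², c²}` is an arithmetic progression of
length 3 in `ℚ` with common difference `d`. -/
theorem squares_AP_of_point_on_Ed (d x y : ℚ) (hy : y ≠ 0)
    (hE : y ^ 2 = x ^ 3 - d ^ 2 * x)
    (a b c : ℚ)
    (ha : a = (x ^ 2 - 2 * d * x - d ^ 2) / (2 * y))
    (hb : b = (x ^ 2 + d ^ 2) / (2 * y))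
    (hc : c = (-x ^ 2 - 2 * d * x + d ^ 2) / (2 * y)) :
    b ^ 2 - a ^ 2 = d ∧ c ^ 2 - b ^ 2 = d := by
  subst ha hb hc
  constructor <;> field_simp <;> linear_combination (-4) * d * hE
end

section
/- Let a, b, c, d be rational numbers with a ≠ b such that b^2 - a^2 = d and c^2 - b^2 = d (so {a^2, b^2, c^2} is an arithmetic progression of length 3 with common difference d). Set X = d(c-b)/(a-b) and Y = d^2(2b-a-c)/(a-b)^2. Then Y^2 = X^3 - d^2·X; that is, (X, Y) is a rational point on the elliptic curve E_d : y^2 = x^3 - d^2 x. -/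
/-!
Write `u = c - b` and `v = b - a`. The two relations say `d = u (c + b) = v (b + a)`, so
`d (u - v) = u v ((b + a) - (c + b))`, i.e. `d (a + c - 2b) = (a - b)(c - b)(c - a)`.
Multiplied by `(a - b)⁴`, `Y² - X³ + d² X` becomes
`d³ (a + c - 2b) · (d (a + c - 2b) - (a - b)(c - b)(c - a))`, which therefore vanishes.
-/

theorem mul_add_sub_two_mul_eq_of_sq_sub_sq {R : Type*} [CommRing R] {a b c d : R}
    (h1 : b ^ 2 - a ^ 2 = d) (h2 : c ^ 2 - b ^ 2 = d) :
    d * (a + c - 2 * b) = (a - b) * (c - b) * (c - a) := by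
  linear_combination (b - c) * h1 + (b - a) * h2

theorem sq_eq_cube_sub_of_mul_add_sub_two_mul_eq {K : Type*} [Field K] {a b c d : K}
    (hab : a ≠ b) (h : d * (a + c - 2 * b) = (a - b) * (c - b) * (c - a)) :
    (d ^ 2 * (2 * b - a - c) / (a - b) ^ 2) ^ 2 =
      (d * (c - b) / (a - b)) ^ 3 - d ^ 2 * (d * (c - b) / (a - b)) := by
  have hab' : a - b ≠ 0 := sub_ne_zero.mpr hab
  field_simp
  linear_combination d ^ 3 * (a + c - 2 * b) * h

/-- If `{a², b², c²}` is an arithmetic progression of length 3 in `ℚ` with common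
difference `d` and `a ≠ b`, then the point `(X, Y)` with `X = d(c - b)/(a - b)` and
`Y = d²(2b - a - c)/(a - b)²` is a rational point on the elliptic curve
`E_d : y² = x³ - d²·x`. -/
theorem point_on_Ed_of_squares_AP (a b c d : ℚ) (hab : a ≠ b)
    (h1 : b ^ 2 - a ^ 2 = d) (h2 : c ^ 2 - b ^ 2 = d)
    (X Y : ℚ)
    (hX : X = d * (c - b) / (a - b))
    (hY : Y = d ^ 2 * (2 * b - a - c) / (a - b) ^ 2) :
    Y ^ 2 = X ^ 3 - d ^ 2 * X := by
  subst hX hY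
  exact sq_eq_cube_sub_of_mul_add_sub_two_mul_eq hab (mul_add_sub_two_mul_eq_of_sq_sub_sq h1 h2)
end

section
/- For every natural number n ≥ 1 there exists a finite set A of 3n perfect squares of integers (i.e. A ⊆ ℤ, every element of A is a square, and |A| = 3n) such that |A+A| ≤ 5n(n+1)/2. In particular N_{3n}(ℤ) ≤ 5n(n+1)/2. -/
open Pointwise

namespace SqAP

def T : ℕ → ℤ × ℤ × ℤ
  | 0 => (3, 4, 5)
  | i + 1 =>
    let p := T i
    ((p.2.1 ^ 2 - p.1 ^ 2) ^ 2, 4 * p.1 * p.2.1 * p.2.2 ^ 2,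
      p.2.2 ^ 4 + 4 * p.1 ^ 2 * p.2.1 ^ 2)

def uu (i : ℕ) : ℤ := (T i).1
def vv (i : ℕ) : ℤ := (T i).2.1
def ww (i : ℕ) : ℤ := (T i).2.2

@[simp] lemma uu_zero : uu 0 = 3 := rfl
@[simp] lemma vv_zero : vv 0 = 4 := rfl
@[simp] lemma ww_zero : ww 0 = 5 := rfl
lemma uu_succ (i : ℕ) : uu (i + 1) = (vv i ^ 2 - uu i ^ 2) ^ 2 := rfl
lemma vv_succ (i : ℕ) : vv (i + 1) = 4 * uu i * vv i * ww i ^ 2 := rfl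
lemma ww_succ (i : ℕ) : ww (i + 1) = ww i ^ 4 + 4 * uu i ^ 2 * vv i ^ 2 := rfl

lemma pyth (i : ℕ) : uu i ^ 2 + vv i ^ 2 = ww i ^ 2 := by
  induction i with
  | zero => norm_num
  | succ i ih =>
    rw [uu_succ, vv_succ, ww_succ]
    linear_combination ((ww i ^ 2 + uu i ^ 2 + vv i ^ 2) *
      (ww i ^ 4 + (uu i ^ 2 + vv i ^ 2) ^ 2 - 8 * uu i ^ 2 * vv i ^ 2)) * ih

lemma parity (i : ℕ) : Odd (uu i) ∧ Even (vv i) ∧ Odd (ww i) := by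
  induction i with
  | zero => exact ⟨⟨1, by norm_num⟩, ⟨2, by norm_num⟩, ⟨2, by norm_num⟩⟩
  | succ i ih =>
    obtain ⟨hu, hv, hw⟩ := ih
    refine ⟨?_, ?_, ?_⟩
    · rw [uu_succ]
      exact Odd.pow ((hv.pow_of_ne_zero (n := 2) two_ne_zero).sub_odd hu.pow)
    · exact ⟨2 * (uu i * vv i * ww i ^ 2), by rw [vv_succ]; ring⟩
    · rw [ww_succ]
      exact (hw.pow).add_even ⟨2 * (uu i ^ 2 * vv i ^ 2), by ring⟩

lemma not_odd_zero : ¬ Odd (0 : ℤ) := by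
  rw [Int.odd_iff]; norm_num

lemma uu_ne (i : ℕ) : uu i ≠ 0 := by
  intro h; exact not_odd_zero (h ▸ (parity i).1)

lemma ww_ne (i : ℕ) : ww i ≠ 0 := by
  intro h; exact not_odd_zero (h ▸ (parity i).2.2)

lemma vv_ne (i : ℕ) : vv i ≠ 0 := by
  induction i with
  | zero => norm_num
  | succ i ih =>
    rw [vv_succ]
    exact mul_ne_zero (mul_ne_zero (mul_ne_zero (by norm_num) (uu_ne i)) ih)
      (pow_ne_zero _ (ww_ne i))

/-- The scaling factor. -/
def F (j : ℕ) : ℤ := 2 * ((vv j ^ 2 - uu j ^ 2) * ww j)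

lemma F_odd_part (j : ℕ) : Odd ((vv j ^ 2 - uu j ^ 2) * ww j) := by
  obtain ⟨hu, hv, hw⟩ := parity j
  exact ((hv.pow_of_ne_zero (n := 2) two_ne_zero).sub_odd hu.pow).mul hw

def ee (n i : ℕ) : ℤ := ∏ j ∈ Finset.Ico i (n - 1), F j

def DD (n : ℕ) : ℤ := 2 * (uu (n - 1) * vv (n - 1))

lemma DD_ne (n : ℕ) : DD n ≠ 0 :=
  mul_ne_zero two_ne_zero (mul_ne_zero (uu_ne _) (vv_ne _))

lemma ee_decomp (n i : ℕ) : ∃ E : ℤ, Odd E ∧ ee n i = 2 ^ (n - 1 - i) * E := by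
  refine ⟨∏ j ∈ Finset.Ico i (n - 1), (vv j ^ 2 - uu j ^ 2) * ww j, ?_, ?_⟩
  · exact Finset.prod_induction _ Odd (fun a b ha hb => ha.mul hb) odd_one
      (fun j _ => F_odd_part j)
  · rw [ee]
    have : ∀ j ∈ Finset.Ico i (n-1), F j = 2 * ((vv j ^ 2 - uu j ^ 2) * ww j) :=
      fun j _ => rfl
    rw [Finset.prod_congr rfl this, Finset.prod_mul_distrib, Finset.prod_const,
      Nat.card_Ico]

lemma ee_ne (n i : ℕ) : ee n i ≠ 0 := by
  obtain ⟨E, hE, h⟩ := ee_decomp n i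
  rw [h]
  exact mul_ne_zero (pow_ne_zero _ two_ne_zero) (fun h0 => not_odd_zero (h0 ▸ hE))

lemma ee_diff (n : ℕ) {i : ℕ} (hi : i < n) :
    ee n i ^ 2 * (2 * (uu i * vv i)) = DD n := by
  have key : ∀ k, k ≤ n - 1 →
      ee n (n - 1 - k) ^ 2 * (2 * (uu (n-1-k) * vv (n-1-k))) = DD n := by
    intro k
    induction k with
    | zero =>
      intro _
      simp only [Nat.sub_zero, ee, Finset.Ico_self, Finset.prod_empty, one_pow, one_mul, DD]
    | succ k ih =>
      intro hk
      set i := n - 1 - (k + 1) with hidef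
      have hi1 : i + 1 = n - 1 - k := by omega
      have hlt : i < n - 1 := by omega
      have hsplit : ee n i = F i * ee n (i + 1) := by
        rw [ee, ee, Finset.prod_eq_prod_Ico_succ_bot hlt]
      have hrec : ee n (i + 1) ^ 2 * (2 * (uu (i+1) * vv (i+1))) = DD n := by
        rw [hi1]; exact ih (by omega)
      calc ee n i ^ 2 * (2 * (uu i * vv i))
          = ee n (i+1) ^ 2 * (2 * (uu (i+1) * vv (i+1))) := by
            rw [hsplit, uu_succ, vv_succ, F]; ring
        _ = DD n := hrec
  have heq := key (n - 1 - i) (by omega)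
  have : n - 1 - (n - 1 - i) = i := by omega
  rwa [this] at heq

/-- The three generators of a block. -/
def tt (i k : ℕ) : ℤ := if k = 0 then vv i - uu i else if k = 1 then ww i else vv i + uu i

lemma tt_odd (i k : ℕ) : Odd (tt i k) := by
  obtain ⟨hu, hv, hw⟩ := parity i
  unfold tt
  split
  · exact hv.sub_odd hu
  · split
    · exact hw
    · exact hv.add_odd hu

lemma tt_sq (i : ℕ) {k : ℕ} (hk : k < 3) :
    tt i k ^ 2 = (vv i - uu i) ^ 2 + (k : ℤ) * (2 * (uu i * vv i)) := by
  interval_cases k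
  · simp [tt]
  · simp only [tt, if_neg one_ne_zero, if_pos rfl]
    push_cast
    linear_combination -pyth i
  · simp only [tt]
    norm_num
    ring

def bb (n i : ℕ) : ℤ := (ee n i * (vv i - uu i)) ^ 2

def mm (n : ℕ) (p : ℕ × ℕ) : ℤ := (ee n p.1 * tt p.1 p.2) ^ 2

lemma mm_eq (n : ℕ) {i k : ℕ} (hi : i < n) (hk : k < 3) :
    mm n (i, k) = bb n i + (k : ℤ) * DD n := by
  rw [mm, bb, ← ee_diff n hi]
  have := tt_sq i hk
  calc (ee n i * tt i k) ^ 2 = ee n i ^ 2 * tt i k ^ 2 := by ring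
    _ = ee n i ^ 2 * ((vv i - uu i) ^ 2 + (k : ℤ) * (2 * (uu i * vv i))) := by rw [this]
    _ = (ee n i * (vv i - uu i)) ^ 2 + (k:ℤ) * (ee n i ^ 2 * (2 * (uu i * vv i))) := by ring

lemma two_pow_sq_inj : ∀ {a b : ℕ} {O P : ℤ}, Odd O → Odd P →
    (2 ^ a * O) ^ 2 = (2 ^ b * P) ^ 2 → a = b := by
  have main : ∀ {a b : ℕ} {O P : ℤ}, Odd O → Odd P →
      (2 ^ a * O) ^ 2 = (2 ^ b * P) ^ 2 → a < b → False := by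
    intro a b O P hO hP h hab
    obtain ⟨c, rfl⟩ : ∃ c, b = a + (c + 1) := ⟨b - a - 1, by omega⟩
    have h' : (2:ℤ) ^ (2*a) * (O ^ 2) = 2 ^ (2*a) * (2 ^ (2*c+2) * P ^ 2) := by
      calc (2:ℤ) ^ (2*a) * (O ^ 2) = (2 ^ a * O) ^ 2 := by ring
        _ = (2 ^ (a + (c+1)) * P) ^ 2 := h
        _ = 2 ^ (2*a) * (2 ^ (2*c+2) * P ^ 2) := by ring
    have h2 := mul_left_cancel₀ (pow_ne_zero (2*a) (two_ne_zero (α := ℤ))) h'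
    have heven : Even (O ^ 2) := ⟨2 ^ (2*c+1) * P ^ 2, by rw [h2]; ring⟩
    exact (Int.not_odd_iff_even.mpr heven) hO.pow
  intro a b O P hO hP h
  rcases lt_trichotomy a b with hab | hab | hab
  · exact absurd (main hO hP h hab) (fun x => x)
  · exact hab
  · exact absurd (main hP hO h.symm hab) (fun x => x)

end SqAP

open SqAP Finset in
/-- For `n ≥ 1` there is a set `A` of `3n` integer squares with
`|A + A| ≤ 5n(n+1)/2`; in particular `N_{3n}(ℤ) ≤ 5n(n+1)/2`. -/
theorem sqSumsetMin_three_n_le (n : ℕ) (hn : 1 ≤ n) :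
    (∃ A : Finset ℤ, (∀ a ∈ A, IsSquare a) ∧ A.card = 3 * n ∧
      (A + A).card ≤ 5 * n * (n + 1) / 2) ∧
    sqSumsetMin ℤ (3 * n) ≤ 5 * n * (n + 1) / 2 := by
  set A : Finset ℤ := ((range n) ×ˢ (range 3)).image (mm n) with hA
  -- every element of A is a square
  have hsq : ∀ a ∈ A, IsSquare a := by
    intro a ha
    rw [hA, mem_image] at ha
    obtain ⟨p, _, rfl⟩ := ha
    exact ⟨ee n p.1 * tt p.1 p.2, by rw [mm]; ring⟩
  -- cardinality of A
  have hcardA : A.card = 3 * n := by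
    rw [hA, card_image_of_injOn, card_product, card_range, card_range, Nat.mul_comm]
    intro p hp q hq heq
    simp only [coe_product, Set.mem_prod, mem_coe, mem_range] at hp hq
    obtain ⟨hp1, hp2⟩ := hp
    obtain ⟨hq1, hq2⟩ := hq
    obtain ⟨E1, hE1, he1⟩ := ee_decomp n p.1
    obtain ⟨E2, hE2, he2⟩ := ee_decomp n q.1
    have h1 : p.1 = q.1 := by
      have heq' : (2 ^ (n-1-p.1) * (E1 * tt p.1 p.2)) ^ 2
          = (2 ^ (n-1-q.1) * (E2 * tt q.1 q.2)) ^ 2 := by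
        have : (ee n p.1 * tt p.1 p.2) ^ 2 = (ee n q.1 * tt q.1 q.2) ^ 2 := heq
        rw [he1, he2] at this
        calc (2 ^ (n-1-p.1) * (E1 * tt p.1 p.2)) ^ 2
            = (2 ^ (n-1-p.1) * E1 * tt p.1 p.2) ^ 2 := by ring
          _ = (2 ^ (n-1-q.1) * E2 * tt q.1 q.2) ^ 2 := this
          _ = (2 ^ (n-1-q.1) * (E2 * tt q.1 q.2)) ^ 2 := by ring
      have := two_pow_sq_inj (hE1.mul (tt_odd p.1 p.2)) (hE2.mul (tt_odd q.1 q.2)) heq'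
      omega
    have h2 : p.2 = q.2 := by
      have heq2 : ee n p.1 ^ 2 * tt p.1 p.2 ^ 2 = ee n p.1 ^ 2 * tt p.1 q.2 ^ 2 := by
        have : (ee n p.1 * tt p.1 p.2) ^ 2 = (ee n q.1 * tt q.1 q.2) ^ 2 := heq
        rw [← h1] at this
        calc ee n p.1 ^ 2 * tt p.1 p.2 ^ 2 = (ee n p.1 * tt p.1 p.2) ^ 2 := by ring
          _ = (ee n p.1 * tt p.1 q.2) ^ 2 := this
          _ = ee n p.1 ^ 2 * tt p.1 q.2 ^ 2 := by ring
      have heq3 := mul_left_cancel₀ (pow_ne_zero 2 (ee_ne n p.1)) heq2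
      rw [tt_sq p.1 hp2, tt_sq p.1 hq2] at heq3
      have heq4 := add_left_cancel heq3
      have hne : (2 : ℤ) * (uu p.1 * vv p.1) ≠ 0 :=
        mul_ne_zero two_ne_zero (mul_ne_zero (uu_ne _) (vv_ne _))
      have := mul_right_cancel₀ hne heq4
      exact_mod_cast this
    exact Prod.ext h1 h2
  -- the sumset is covered by a small set
  have hsub : A + A ⊆ (range n).biUnion (fun j =>
      ((range (j+1)) ×ˢ (range 5)).image
        (fun p : ℕ × ℕ => bb n p.1 + bb n j + (p.2 : ℤ) * DD n)) := by
    intro x hx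
    rw [Finset.mem_add] at hx
    obtain ⟨y, hy, z, hz, rfl⟩ := hx
    rw [hA, mem_image] at hy hz
    obtain ⟨p, hp, rfl⟩ := hy
    obtain ⟨q, hq, rfl⟩ := hz
    rw [mem_product, mem_range, mem_range] at hp hq
    obtain ⟨hp1, hp2⟩ := hp
    obtain ⟨hq1, hq2⟩ := hq
    rw [show p = (p.1, p.2) from rfl, show q = (q.1, q.2) from rfl,
      mm_eq n hp1 hp2, mm_eq n hq1 hq2]
    rcases le_total p.1 q.1 with hle | hle
    · rw [mem_biUnion]
      refine ⟨q.1, mem_range.mpr hq1, ?_⟩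
      rw [mem_image]
      refine ⟨(p.1, p.2 + q.2), ?_, ?_⟩
      · rw [mem_product, mem_range, mem_range]; omega
      · push_cast; ring
    · rw [mem_biUnion]
      refine ⟨p.1, mem_range.mpr hp1, ?_⟩
      rw [mem_image]
      refine ⟨(q.1, p.2 + q.2), ?_, ?_⟩
      · rw [mem_product, mem_range, mem_range]; omega
      · push_cast; ring
  -- cardinality bound
  have hbound : (A + A).card ≤ 5 * n * (n + 1) / 2 := by
    have h1 : (A + A).card ≤ ∑ j ∈ range n, (j + 1) * 5 := by
      calc (A + A).card ≤ _ := card_le_card hsub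
        _ ≤ ∑ j ∈ range n, (((range (j+1)) ×ˢ (range 5)).image
              (fun p : ℕ × ℕ => bb n p.1 + bb n j + (p.2 : ℤ) * DD n)).card :=
            card_biUnion_le
        _ ≤ ∑ j ∈ range n, (j + 1) * 5 := by
            apply Finset.sum_le_sum
            intro j _
            calc _ ≤ ((range (j+1)) ×ˢ (range 5)).card := card_image_le
              _ = (j + 1) * 5 := by rw [card_product, card_range, card_range]
    have h2 : (∑ j ∈ range n, (j + 1) * 5) = (∑ i ∈ range (n+1), i) * 5 := by
      rw [← Finset.sum_mul]
      congr 1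
      rw [Finset.sum_range_succ' (fun i => i) n]
      simp
    have h3 : (∑ i ∈ range (n+1), i) * 2 = (n + 1) * n := by
      rw [Finset.sum_range_id_mul_two]
      simp
    rw [h2] at h1
    have h4 : 5 * n * (n + 1) = (∑ i ∈ range (n+1), i) * 10 := by
      rw [show (∑ i ∈ range (n+1), i) * 10 = ((∑ i ∈ range (n+1), i) * 2) * 5 by ring, h3]
      ring
    omega
  refine ⟨⟨A, hsq, hcardA, hbound⟩, ?_⟩
  exact le_trans (Nat.sInf_le ⟨A, hsq, hcardA, rfl⟩) hbound
end

section
/- For every natural number n ≥ 1 there exists a finite set A of 3n+1 perfect squares of integers (i.e. A ⊆ ℤ, every element of A is a square, and |A| = 3n+1) such that |A+A| ≤ (5n^2 + 9n + 2)/2. In particular N_{3n+1}(ℤ) ≤ (5n^2 + 9n + 2)/2. -/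
open Pointwise



/-- Fermat's duplication map on Pythagorean triples. -/
private def sqF (p : ℤ × ℤ × ℤ) : ℤ × ℤ × ℤ :=
  ((p.1 ^ 2 - p.2.1 ^ 2) ^ 2, 4 * p.1 * p.2.1 * p.2.2 ^ 2,
    p.1 ^ 4 + 6 * p.1 ^ 2 * p.2.1 ^ 2 + p.2.1 ^ 4)

private def sqTri : ℕ → ℤ × ℤ × ℤ
  | 0 => (5, 12, 13)
  | j + 1 => sqF (sqTri j)

private def ta (j : ℕ) : ℤ := (sqTri j).1
private def tb (j : ℕ) : ℤ := (sqTri j).2.1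
private def tc (j : ℕ) : ℤ := (sqTri j).2.2

private lemma ta_succ (j : ℕ) : ta (j+1) = (ta j ^ 2 - tb j ^ 2) ^ 2 := rfl
private lemma tb_succ (j : ℕ) : tb (j+1) = 4 * ta j * tb j * tc j ^ 2 := rfl
private lemma tc_succ (j : ℕ) : tc (j+1) = ta j ^ 4 + 6 * ta j ^ 2 * tb j ^ 2 + tb j ^ 4 := rfl
private lemma ta_zero : ta 0 = 5 := rfl
private lemma tb_zero : tb 0 = 12 := rfl
private lemma tc_zero : tc 0 = 13 := rfl

private lemma sq_even {a : ℤ} (h : Even a) : Even (a ^ 2) := by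
  obtain ⟨r, rfl⟩ := h; exact ⟨2*r^2, by ring⟩

private lemma odd_of_sq {a : ℤ} (h : Odd (a ^ 2)) : Odd a := by
  rcases Int.even_or_odd a with he | ho
  · obtain ⟨r, rfl⟩ := he
    exact absurd h (by rw [Int.not_odd_iff_even]; exact ⟨2*r^2, by ring⟩)
  · exact ho

private lemma tri_inv (j : ℕ) : Odd (ta j) ∧ Even (tb j) ∧
    ta j ^ 2 + tb j ^ 2 = tc j ^ 2 ∧ 0 < ta j ∧ 0 < tb j ∧ 0 < tc j := by
  induction j with
  | zero =>
    refine ⟨⟨2, by norm_num [ta_zero]⟩, ⟨6, by norm_num [tb_zero]⟩, ?_, ?_, ?_, ?_⟩ <;>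
      norm_num [ta_zero, tb_zero, tc_zero]
  | succ j ih =>
    obtain ⟨ho, he, hp, ha, hb, hc⟩ := ih
    have hodd : Odd (ta j ^ 2 - tb j ^ 2) := (ho.pow).sub_even (sq_even he)
    have hne : ta j ^ 2 - tb j ^ 2 ≠ 0 := by
      rintro h; rw [h] at hodd; exact (by norm_num : ¬ Odd (0:ℤ)) hodd
    refine ⟨?_, ?_, ?_, ?_, ?_, ?_⟩
    · rw [ta_succ]; exact hodd.pow
    · rw [tb_succ]; exact ⟨2 * ta j * tb j * tc j ^ 2, by ring⟩
    · rw [ta_succ, tb_succ, tc_succ]; linear_combination (-16*ta j^2*tb j^2*(ta j^2 + tb j^2 + tc j^2)) * hp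
    · rw [ta_succ]; positivity
    · rw [tb_succ]; positivity
    · rw [tc_succ]; positivity

private lemma tc_odd (j : ℕ) : Odd (tc j) := by
  obtain ⟨ho, he, hp, _⟩ := tri_inv j
  exact odd_of_sq (hp ▸ (ho.pow.add_even (sq_even he)))

/-- the scaling factor -/
private def tt (i : ℕ) : ℤ := 2 * (tc i * (ta i ^ 2 - tb i ^ 2))
/-- product of scaling factors from j to n -/
private def rr (n j : ℕ) : ℤ := ∏ i ∈ Finset.Ico j n, tt i
/-- odd part -/
private def qq (n j : ℕ) : ℤ := ∏ i ∈ Finset.Ico j n, (tc i * (ta i ^ 2 - tb i ^ 2))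

private lemma rr_eq (n j : ℕ) : rr n j = 2 ^ (n - j) * qq n j := by
  unfold rr qq tt
  rw [Finset.prod_mul_distrib, Finset.prod_const, Nat.card_Ico]

private lemma qq_odd (n j : ℕ) : Odd (qq n j) := by
  unfold qq
  refine Finset.prod_induction _ Odd (fun a b ha hb => ha.mul hb) odd_one (fun i _ => ?_)
  exact (tc_odd i).mul ((tri_inv i).1.pow.sub_even (sq_even (tri_inv i).2.1))

private lemma rr_ne (n j : ℕ) : rr n j ≠ 0 := by
  rw [rr_eq]
  refine mul_ne_zero (by positivity) (fun h => ?_)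
  have := qq_odd n j; rw [h] at this; exact (by norm_num : ¬ Odd (0:ℤ)) this

private lemma rr_succ (n j : ℕ) (h : j < n) : rr n j = tt j * rr n (j+1) :=
  Finset.prod_eq_prod_Ico_succ_bot h _

private lemma abr_const (n : ℕ) : ∀ j, j < n →
    ta j * tb j * rr n j ^ 2 = ta 0 * tb 0 * rr n 0 ^ 2 := by
  intro j
  induction j with
  | zero => intro _; rfl
  | succ j ih =>
    intro h
    have hj : j < n := Nat.lt_of_succ_lt h
    have step : ta (j+1) * tb (j+1) * rr n (j+1) ^ 2 = ta j * tb j * rr n j ^ 2 := by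
      rw [rr_succ n j hj, ta_succ, tb_succ]
      have hp := (tri_inv j).2.2.1
      unfold tt; ring
    rw [step, ih hj]

private def mm (n j : ℕ) : ℤ := (tc j * rr n j) ^ 2
private def DD (n : ℕ) : ℤ := 2 * (ta 0 * tb 0 * rr n 0 ^ 2)

private lemma DD_pos (n : ℕ) : 0 < DD n := by
  unfold DD
  rw [ta_zero, tb_zero]
  have h := rr_ne n 0
  positivity

private lemma mem1 (n j : ℕ) (hj : j < n) :
    mm n j - DD n = ((ta j - tb j) * rr n j) ^ 2 := by
  have h1 := abr_const n j hj
  have h2 := (tri_inv j).2.2.1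
  unfold mm DD
  linear_combination 2 * h1 - (rr n j)^2 * h2

private lemma mem2 (n j : ℕ) (hj : j < n) :
    mm n j + DD n = ((ta j + tb j) * rr n j) ^ 2 := by
  have h1 := abr_const n j hj
  have h2 := (tri_inv j).2.2.1
  unfold mm DD
  linear_combination (-2) * h1 - (rr n j)^2 * h2

private lemma mem3 (n : ℕ) : mm n 0 + 3 * DD n = (23 * rr n 0) ^ 2 := by
  unfold mm DD
  rw [ta_zero, tb_zero, tc_zero]; ring

private def triple (n j : ℕ) : Finset ℤ := {mm n j - DD n, mm n j, mm n j + DD n}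

private def bigA (n : ℕ) : Finset ℤ :=
  insert (mm n 0 + 3 * DD n) ((Finset.range n).biUnion (triple n))

/-- every member of a triple is an odd multiple of `rr n j`, squared -/
private lemma triple_sq {n j : ℕ} (hj : j < n) {x : ℤ} (hx : x ∈ triple n j) :
    ∃ w : ℤ, Odd w ∧ x = (w * rr n j) ^ 2 := by
  have ho := (tri_inv j).1
  have he := (tri_inv j).2.1
  simp only [triple, Finset.mem_insert, Finset.mem_singleton] at hx
  rcases hx with rfl | rfl | rfl
  · exact ⟨ta j - tb j, ho.sub_even he, mem1 n j hj⟩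
  · exact ⟨tc j, tc_odd j, rfl⟩
  · exact ⟨ta j + tb j, ho.add_even he, mem2 n j hj⟩

private lemma sq_eq_aux {n j k : ℕ} (hjk : j < k) (hk : k ≤ n) {w w' : ℤ}
    (hw : Odd w) (hw' : Odd w') (h : (w * rr n j) ^ 2 = (w' * rr n k) ^ 2) : False := by
  rw [rr_eq, rr_eq] at h
  have hsplit : (2:ℤ) ^ (n - j) = 2 ^ (k - j) * 2 ^ (n - k) := by
    rw [← pow_add]; congr 1; omega
  rw [hsplit] at h
  have h2 : ((w * qq n j * 2 ^ (k - j)) ^ 2) * (2 ^ (n - k) : ℤ) ^ 2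
      = ((w' * qq n k) ^ 2) * (2 ^ (n - k) : ℤ) ^ 2 := by linear_combination h
  have h3 := mul_right_cancel₀ (by positivity) h2
  have heven : Even ((w * qq n j * 2 ^ (k - j)) ^ 2) := by
    obtain ⟨m, hm⟩ : ∃ m, k - j = m + 1 := ⟨k - j - 1, by omega⟩
    refine sq_even ⟨w * qq n j * 2 ^ m, ?_⟩
    rw [hm, pow_succ]; ring
  rw [h3] at heven
  have hodd : Odd ((w' * qq n k) ^ 2) := (hw'.mul (qq_odd n k)).pow
  exact (Int.not_odd_iff_even.mpr heven) hodd

private lemma triple_idx {n j k : ℕ} (hj : j < n) (hk : k < n) {w w' : ℤ}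
    (hw : Odd w) (hw' : Odd w') (h : (w * rr n j) ^ 2 = (w' * rr n k) ^ 2) : j = k := by
  rcases Nat.lt_trichotomy j k with hlt | heq | hgt
  · exact absurd h (fun h => sq_eq_aux hlt hk.le hw hw' h)
  · exact heq
  · exact absurd h.symm (fun h => sq_eq_aux hgt hj.le hw' hw h)

private lemma triple_card (n j : ℕ) : (triple n j).card = 3 := by
  have hD := DD_pos n
  unfold triple
  rw [Finset.card_insert_of_notMem (by simp; constructor <;> intro h <;> linarith),
    Finset.card_insert_of_notMem (by simp; intro h; linarith), Finset.card_singleton]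

private lemma triple_disj (n : ℕ) : ∀ j ∈ Finset.range n, ∀ k ∈ Finset.range n,
    j ≠ k → Disjoint (triple n j) (triple n k) := by
  intro j hj k hk hjk
  rw [Finset.mem_range] at hj hk
  rw [Finset.disjoint_left]
  intro x hxj hxk
  obtain ⟨w, hw, rfl⟩ := triple_sq hj hxj
  obtain ⟨w', hw', he⟩ := triple_sq hk hxk
  exact hjk (triple_idx hj hk hw hw' he)

private lemma extra_notMem {n : ℕ} (hn : 1 ≤ n) :
    mm n 0 + 3 * DD n ∉ (Finset.range n).biUnion (triple n) := by
  intro h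
  rw [Finset.mem_biUnion] at h
  obtain ⟨j, hj, hx⟩ := h
  rw [Finset.mem_range] at hj
  obtain ⟨w, hw, he⟩ := triple_sq hj hx
  rw [mem3 n] at he
  have h0 : (0:ℕ) = j := triple_idx hn hj (⟨11, by norm_num⟩ : Odd (23:ℤ)) hw he
  obtain rfl := h0.symm
  have hD := DD_pos n
  simp only [triple, Finset.mem_insert, Finset.mem_singleton] at hx
  rcases hx with h | h | h <;> linarith

private lemma bigA_card {n : ℕ} (hn : 1 ≤ n) : (bigA n).card = 3 * n + 1 := by
  unfold bigA
  rw [Finset.card_insert_of_notMem (extra_notMem hn),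
    Finset.card_biUnion (triple_disj n)]
  simp [triple_card]
  ring

private lemma bigA_squares (n : ℕ) : ∀ a ∈ bigA n, IsSquare a := by
  intro a ha
  rw [bigA, Finset.mem_insert] at ha
  rcases ha with rfl | ha
  · exact ⟨23 * rr n 0, by rw [mem3]; ring⟩
  · rw [Finset.mem_biUnion] at ha
    obtain ⟨j, hj, hx⟩ := ha
    rw [Finset.mem_range] at hj
    obtain ⟨w, _, rfl⟩ := triple_sq hj hx
    exact ⟨w * rr n j, by ring⟩

private lemma bigA_mem_form {n : ℕ} {x : ℤ} (hx : x ∈ bigA n) :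
    x = mm n 0 + 3 * DD n ∨
    ∃ j, j < n ∧ ∃ ε : ℤ, -1 ≤ ε ∧ ε ≤ 1 ∧ x = mm n j + ε * DD n := by
  rw [bigA, Finset.mem_insert] at hx
  rcases hx with rfl | hx
  · exact Or.inl rfl
  · rw [Finset.mem_biUnion] at hx
    obtain ⟨j, hj, hx⟩ := hx
    rw [Finset.mem_range] at hj
    refine Or.inr ⟨j, hj, ?_⟩
    simp only [triple, Finset.mem_insert, Finset.mem_singleton] at hx
    rcases hx with rfl | rfl | rfl
    · exact ⟨-1, by norm_num, by norm_num, by ring⟩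
    · exact ⟨0, by norm_num, by norm_num, by ring⟩
    · exact ⟨1, by norm_num, by norm_num, by ring⟩

private def covIdx (n : ℕ) : Finset ((_ : ℕ) × ℕ) :=
  (Finset.range n).sigma fun j => Finset.Icc j (n-1)

private def cov (n : ℕ) : Finset ℤ :=
  ((covIdx n ×ˢ ({-2,-1,0,1,2} : Finset ℤ)).image
      fun p => mm n p.1.1 + mm n p.1.2 + p.2 * DD n)
  ∪ ((Finset.range n ×ˢ ({3,4} : Finset ℤ)).image
      fun p => mm n 0 + mm n p.1 + p.2 * DD n)
  ∪ {2 * mm n 0 + 6 * DD n}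

private lemma mem_cov_pair {n : ℕ} {j k : ℕ} {ε : ℤ} (hj : j < n) (hk : k < n)
    (hε1 : -2 ≤ ε) (hε2 : ε ≤ 2) : mm n j + mm n k + ε * DD n ∈ cov n := by
  rcases le_total j k with h | h
  · refine Finset.mem_union_left _ (Finset.mem_union_left _ ?_)
    refine Finset.mem_image.mpr ⟨⟨⟨j, k⟩, ε⟩, ?_, rfl⟩
    simp only [Finset.mem_product, covIdx, Finset.mem_sigma, Finset.mem_range, Finset.mem_Icc]
    refine ⟨⟨hj, h, by omega⟩, ?_⟩
    simp only [Finset.mem_insert, Finset.mem_singleton]; omega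
  · refine Finset.mem_union_left _ (Finset.mem_union_left _ ?_)
    refine Finset.mem_image.mpr ⟨⟨⟨k, j⟩, ε⟩, ?_, by ring⟩
    simp only [Finset.mem_product, covIdx, Finset.mem_sigma, Finset.mem_range, Finset.mem_Icc]
    refine ⟨⟨hk, h, by omega⟩, ?_⟩
    simp only [Finset.mem_insert, Finset.mem_singleton]; omega

private lemma bigA_add_subset {n : ℕ} (hn : 1 ≤ n) : bigA n + bigA n ⊆ cov n := by
  intro x hx
  rw [Finset.mem_add] at hx
  obtain ⟨y, hy, z, hz, rfl⟩ := hx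
  rcases bigA_mem_form hy with rfl | ⟨j, hj, ε₁, hε₁l, hε₁r, rfl⟩ <;>
    rcases bigA_mem_form hz with rfl | ⟨k, hk, ε₂, hε₂l, hε₂r, rfl⟩
  · -- e + e
    refine Finset.mem_union_right _ ?_
    simp only [Finset.mem_singleton]; ring
  · -- e + triple
    rcases (by omega : ε₂ = -1 ∨ ε₂ = 0 ∨ ε₂ = 1) with rfl | rfl | rfl
    · have : mm n 0 + 3 * DD n + (mm n k + (-1) * DD n) = mm n 0 + mm n k + 2 * DD n := by ring
      rw [this]; exact mem_cov_pair hn hk (by norm_num) (by norm_num)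
    · refine Finset.mem_union_left _ (Finset.mem_union_right _ ?_)
      refine Finset.mem_image.mpr ⟨⟨k, 3⟩, ?_, by ring⟩
      simp [hk]
    · refine Finset.mem_union_left _ (Finset.mem_union_right _ ?_)
      refine Finset.mem_image.mpr ⟨⟨k, 4⟩, ?_, by ring⟩
      simp [hk]
  · -- triple + e
    rcases (by omega : ε₁ = -1 ∨ ε₁ = 0 ∨ ε₁ = 1) with rfl | rfl | rfl
    · have : mm n j + (-1) * DD n + (mm n 0 + 3 * DD n) = mm n 0 + mm n j + 2 * DD n := by ring
      rw [this]; exact mem_cov_pair hn hj (by norm_num) (by norm_num)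
    · refine Finset.mem_union_left _ (Finset.mem_union_right _ ?_)
      refine Finset.mem_image.mpr ⟨⟨j, 3⟩, ?_, by ring⟩
      simp [hj]
    · refine Finset.mem_union_left _ (Finset.mem_union_right _ ?_)
      refine Finset.mem_image.mpr ⟨⟨j, 4⟩, ?_, by ring⟩
      simp [hj]
  · -- triple + triple
    have : mm n j + ε₁ * DD n + (mm n k + ε₂ * DD n)
        = mm n j + mm n k + (ε₁ + ε₂) * DD n := by ring
    rw [this]
    exact mem_cov_pair hj hk (by omega) (by omega)

private lemma covIdx_card (n : ℕ) : 2 * (covIdx n).card = n * (n + 1) := by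
  unfold covIdx
  rw [Finset.card_sigma]
  have h1 : ∀ j ∈ Finset.range n, (Finset.Icc j (n-1)).card = n - j := by
    intro j hj
    rw [Finset.mem_range] at hj
    rw [Nat.card_Icc]
    omega
  rw [Finset.sum_congr rfl h1]
  have h2 : ∑ j ∈ Finset.range n, (n - j) = ∑ j ∈ Finset.range n, (j + 1) := by
    have := Finset.sum_range_reflect (fun j => j + 1) n
    rw [← this]
    refine Finset.sum_congr rfl fun j hj => ?_
    rw [Finset.mem_range] at hj
    omega
  rw [h2, Finset.sum_add_distrib, Finset.sum_const, Finset.card_range, smul_eq_mul, mul_one]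
  have := Finset.sum_range_id_mul_two n
  have h4 : n * (n + 1) = n * (n - 1) + 2 * n := by
    cases n with
    | zero => rfl
    | succ m => simp [Nat.succ_sub_one]; ring
  omega

private lemma cov_card {n : ℕ} : (cov n).card ≤ (5 * n ^ 2 + 9 * n + 2) / 2 := by
  have h1 : (cov n).card ≤ (covIdx n).card * 5 + n * 2 + 1 := by
    unfold cov
    refine le_trans (Finset.card_union_le _ _) ?_
    have ha : (((covIdx n ×ˢ ({-2,-1,0,1,2} : Finset ℤ)).image
        fun p => mm n p.1.1 + mm n p.1.2 + p.2 * DD n) ∪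
        ((Finset.range n ×ˢ ({3,4} : Finset ℤ)).image
        fun p => mm n 0 + mm n p.1 + p.2 * DD n)).card
        ≤ (covIdx n).card * 5 + n * 2 := by
      refine le_trans (Finset.card_union_le _ _) ?_
      have hb := Finset.card_image_le (s := covIdx n ×ˢ ({-2,-1,0,1,2} : Finset ℤ))
        (f := fun p => mm n p.1.1 + mm n p.1.2 + p.2 * DD n)
      have hc := Finset.card_image_le (s := Finset.range n ×ˢ ({3,4} : Finset ℤ))
        (f := fun p => mm n 0 + mm n p.1 + p.2 * DD n)
      rw [Finset.card_product] at hb hc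
      have h5 : ({-2,-1,0,1,2} : Finset ℤ).card = 5 := by decide
      have h42 : ({3,4} : Finset ℤ).card = 2 := by decide
      rw [h5] at hb
      rw [h42, Finset.card_range] at hc
      omega
    have hd : ({2 * mm n 0 + 6 * DD n} : Finset ℤ).card = 1 := Finset.card_singleton _
    omega
  have h2 := covIdx_card n
  have h3 : n ^ 2 = n * n := sq n
  have h4 : n * (n + 1) = n * n + n := by ring
  omega

private lemma bigA_sumset_card {n : ℕ} (hn : 1 ≤ n) :
    (bigA n + bigA n).card ≤ (5 * n ^ 2 + 9 * n + 2) / 2 :=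
  le_trans (Finset.card_le_card (bigA_add_subset hn)) cov_card

/-- For `n ≥ 1` there is a set `A` of `3n + 1` integer squares with
`|A + A| ≤ (5n² + 9n + 2)/2`; in particular `N_{3n+1}(ℤ) ≤ (5n² + 9n + 2)/2`. -/
theorem sqSumsetMin_three_n_add_one_le (n : ℕ) (hn : 1 ≤ n) :
    (∃ A : Finset ℤ, (∀ a ∈ A, IsSquare a) ∧ A.card = 3 * n + 1 ∧
      (A + A).card ≤ (5 * n ^ 2 + 9 * n + 2) / 2) ∧
    sqSumsetMin ℤ (3 * n + 1) ≤ (5 * n ^ 2 + 9 * n + 2) / 2 := by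
  refine ⟨⟨bigA n, bigA_squares n, bigA_card hn, bigA_sumset_card hn⟩, ?_⟩
  refine le_trans (Nat.sInf_le ?_) (bigA_sumset_card hn)
  exact ⟨bigA n, bigA_squares n, bigA_card hn, rfl⟩
end

section
/- For every natural number n ≥ 1 there exists a finite set A of 3n+2 perfect squares of integers (i.e. A ⊆ ℤ, every element of A is a square, and |A| = 3n+2) such that |A+A| ≤ (5n^2 + 13n + 6)/2. In particular N_{3n+2}(ℤ) ≤ (5n^2 + 13n + 6)/2. -/
open Pointwise

namespace SqSumAux

/-- (leg a (odd), leg b (even), hypotenuse h, half of b). -/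
def T : ℕ → ℤ × ℤ × ℤ × ℤ
  | 0 => (49, 1200, 1201, 600)
  | k+1 =>
    (((T k).1 ^ 2 - (T k).2.1 ^ 2) ^ 2,
     4 * (T k).1 * (T k).2.1 * (T k).2.2.1 ^ 2,
     (T k).2.2.1 ^ 4 + 4 * ((T k).1 * (T k).2.1) ^ 2,
     2 * (T k).1 * (T k).2.1 * (T k).2.2.1 ^ 2)

def a (k : ℕ) : ℤ := (T k).1
def b (k : ℕ) : ℤ := (T k).2.1
def h (k : ℕ) : ℤ := (T k).2.2.1
def f (k : ℕ) : ℤ := (T k).2.2.2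

@[simp] lemma a_zero : a 0 = 49 := rfl
@[simp] lemma b_zero : b 0 = 1200 := rfl
@[simp] lemma h_zero : h 0 = 1201 := rfl
@[simp] lemma f_zero : f 0 = 600 := rfl
lemma a_succ (k : ℕ) : a (k+1) = (a k ^ 2 - b k ^ 2) ^ 2 := rfl
lemma b_succ (k : ℕ) : b (k+1) = 4 * a k * b k * h k ^ 2 := rfl
lemma h_succ (k : ℕ) : h (k+1) = h k ^ 4 + 4 * (a k * b k) ^ 2 := rfl
lemma f_succ (k : ℕ) : f (k+1) = 2 * a k * b k * h k ^ 2 := rfl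

lemma pyth : ∀ k, a k ^ 2 + b k ^ 2 = h k ^ 2
  | 0 => by norm_num
  | (k+1) => by
    have ih := pyth k
    rw [a_succ, b_succ, h_succ]
    linear_combination (h k ^ 6 + (a k ^2 + b k ^2) * h k ^ 4
      - (8 * a k ^2 * b k ^2 - (a k ^2 + b k ^2)^2) * h k ^ 2
      - (a k ^2 + b k ^2) * (8 * a k ^2 * b k ^2 - (a k ^2 + b k ^2)^2)) * ih

lemma b_eq (k : ℕ) : b k = 2 * f k := by
  cases k with
  | zero => norm_num
  | succ k => rw [b_succ, f_succ]; ring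

lemma parity : ∀ k, Odd (a k) ∧ Odd (h k) ∧ Even (f k)
  | 0 => ⟨⟨24, by norm_num⟩, ⟨600, by norm_num⟩, ⟨300, by norm_num⟩⟩
  | (k+1) => by
    obtain ⟨ha, hh, hf⟩ := parity k
    have hb : Even (b k) := by rw [b_eq k]; exact even_two_mul _
    refine ⟨?_, ?_, ?_⟩
    · rw [a_succ]
      obtain ⟨r, hr⟩ := hb
      exact ((ha.pow).sub_even ⟨2*r^2, by rw [hr]; ring⟩).pow
    · rw [h_succ]
      exact (hh.pow).add_even ⟨2 * (a k * b k)^2, by ring⟩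
    · rw [f_succ]
      exact ⟨a k * b k * h k ^ 2, by ring⟩

lemma odd_a (k : ℕ) : Odd (a k) := (parity k).1
lemma odd_h (k : ℕ) : Odd (h k) := (parity k).2.1
lemma even_b (k : ℕ) : Even (b k) := by rw [b_eq k]; exact even_two_mul _

lemma ab_ne (k : ℕ) : a k - b k ≠ 0 := by
  intro hc
  have : Odd (a k - b k) := (odd_a k).sub_even (even_b k)
  rw [hc] at this
  exact ((Int.not_odd_iff_even.mpr Even.zero)) this

lemma bounds : ∀ k, 49 ≤ a k ∧ 1200 ≤ b k ∧ 1201 ≤ h k ∧ 600 ≤ f k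
  | 0 => by norm_num
  | (k+1) => by
    obtain ⟨ha, hb, hh, hf⟩ := bounds k
    have h1 : 1 ≤ (a k - b k)^2 := by
      have := Int.one_le_abs (ab_ne k)
      nlinarith [abs_nonneg (a k - b k), sq_abs (a k - b k)]
    have hab : (58800:ℤ) ≤ a k * b k := by nlinarith
    have hh2 : (1442401:ℤ) ≤ h k ^ 2 := by nlinarith
    have key : (84813178800:ℤ) ≤ a k * b k * h k ^ 2 := by
      calc (84813178800:ℤ) ≤ 58800 * 1442401 := by norm_num
      _ ≤ a k * b k * (h k ^2) := mul_le_mul hab hh2 (by norm_num) (by linarith)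
    refine ⟨?_, ?_, ?_, ?_⟩
    · rw [a_succ]
      have : (1249:ℤ)^2 ≤ (a k + b k)^2 := by nlinarith
      calc (49:ℤ) ≤ 1 * 1249^2 := by norm_num
      _ ≤ (a k - b k)^2 * (a k + b k)^2 := by
          apply mul_le_mul h1 this (by norm_num) (by nlinarith)
      _ = ((a k)^2 - (b k)^2)^2 := by ring
    · rw [b_succ]; nlinarith
    · rw [h_succ]; nlinarith
    · rw [f_succ]; nlinarith

lemma a_pos (k : ℕ) : 0 < a k := by have := (bounds k).1; linarith
lemma b_pos (k : ℕ) : 0 < b k := by have := (bounds k).2.1; linarith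


/-- scaling factor ρ. -/
def r (j : ℕ) : ℤ := 2 * (h j * (a j ^ 2 - b j ^ 2))

def t (N k : ℕ) : ℤ := ∏ j ∈ Finset.Ico k N, r j

@[simp] lemma t_self (N : ℕ) : t N N = 1 := by simp [t]

lemma ab_step (k : ℕ) : a (k+1) * b (k+1) = a k * b k * r k ^ 2 := by
  rw [a_succ, b_succ, r]; ring

lemma prodInv : ∀ (m k : ℕ), a k * b k * t (k+m) k ^ 2 = a (k+m) * b (k+m)
  | 0, k => by simp
  | (m+1), k => by
    have htop : t (k+m+1) k = t (k+m) k * r (k+m) := by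
      rw [t, t, Finset.prod_Ico_succ_top (by omega)]
    have ih := prodInv m k
    rw [show k+(m+1) = (k+m)+1 by omega, htop, ab_step]
    linear_combination (r (k+m))^2 * ih

lemma prodInv' {k N : ℕ} (hk : k ≤ N) : a k * b k * t N k ^ 2 = a N * b N := by
  obtain ⟨m, rfl⟩ := Nat.exists_eq_add_of_le hk
  exact prodInv m k

lemma odd_r (j : ℕ) : ∃ u : ℤ, Odd u ∧ r j = 2 * u := by
  refine ⟨h j * (a j ^ 2 - b j ^ 2), ?_, rfl⟩
  obtain ⟨s, hs⟩ := even_b j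
  exact (odd_h j).mul (((odd_a j).pow).sub_even ⟨2*s^2, by rw [hs]; ring⟩)

lemma t_decomp : ∀ (m k : ℕ), ∃ u : ℤ, Odd u ∧ t (k+m) k = 2 ^ m * u
  | 0, k => ⟨1, odd_one, by simp⟩
  | (m+1), k => by
    obtain ⟨u, hu, htu⟩ := t_decomp m k
    obtain ⟨v, hv, hrv⟩ := odd_r (k+m)
    refine ⟨u * v, hu.mul hv, ?_⟩
    have htop : t (k+m+1) k = t (k+m) k * r (k+m) := by
      rw [t, t, Finset.prod_Ico_succ_top (by omega)]
    rw [show k+(m+1) = (k+m)+1 by omega, htop, htu, hrv]; ring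

lemma t_decomp' {k N : ℕ} (hk : k ≤ N) : ∃ u : ℤ, Odd u ∧ t N k = 2 ^ (N - k) * u := by
  obtain ⟨m, rfl⟩ := Nat.exists_eq_add_of_le hk
  simpa using t_decomp m k

/-- distinctness of squares with different 2-adic valuation. -/
lemma pow_sq_ne {α β : ℕ} {u v : ℤ} (hu : Odd u) (hv : Odd v) (hne : α ≠ β) :
    (2 ^ α * u) ^ 2 ≠ (2 ^ β * v) ^ 2 := by
  have key : ∀ (α β : ℕ) (u v : ℤ), Odd u → Odd v → α < β → (2 ^ α * u) ^ 2 ≠ (2 ^ β * v) ^ 2 := by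
    intro α β u v hu hv hlt heq
    obtain ⟨d, rfl⟩ : ∃ d, β = α + (d + 1) := ⟨β - α - 1, by omega⟩
    have h0 : ((2:ℤ) ^ α)^2 ≠ 0 := pow_ne_zero _ (pow_ne_zero _ two_ne_zero)
    have hc : ((2:ℤ)^α)^2 * (u ^ 2) = ((2:ℤ)^α)^2 * ((2^(d+1))^2 * v ^ 2) := by
      rw [pow_add] at heq; linear_combination heq
    have h2 : u ^ 2 = (2^(d+1))^2 * v^2 := mul_left_cancel₀ h0 hc
    have heu : Even ((2:ℤ)^(d+1)) := ⟨2^d, by ring⟩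
    have : Even (u ^ 2) := by
      rw [h2, sq ((2:ℤ)^(d+1))]
      exact ((heu.mul_right _).mul_right _)
    exact (Int.not_even_iff_odd.mpr (hu.pow)) this
  rcases lt_or_gt_of_ne hne with hlt | hgt
  · exact key _ _ _ _ hu hv hlt
  · exact fun hx => key _ _ _ _ hv hu hgt hx.symm


/-! ### The construction: `m+1` blocks (3-term APs of squares) plus one 2-term AP,
all with common difference `D m = 2 * a m * b m`. -/

def X (m k : ℕ) : ℤ := (a k - b k) * t m k
def Hh (m k : ℕ) : ℤ := h k * t m k
def Y (m k : ℕ) : ℤ := (a k + b k) * t m k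
def D (m : ℕ) : ℤ := 2 * (a m * b m)
def M (m : ℕ) : ℤ := a m * f m

def blk (m k : ℕ) : Finset ℤ := {X m k ^ 2, Hh m k ^ 2, Y m k ^ 2}

def A (m : ℕ) : Finset ℤ :=
  (Finset.range (m+1)).biUnion (blk m) ∪ {(M m - 1) ^ 2, (M m + 1) ^ 2}

lemma D_pos (m : ℕ) : 0 < D m := by
  have := a_pos m; have := b_pos m
  have : 0 < a m * b m := mul_pos ‹_› ‹_›
  rw [D]; linarith

lemma Hh_sq {k m : ℕ} (hk : k ≤ m) : Hh m k ^ 2 = X m k ^ 2 + D m := by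
  have h1 := pyth k
  have h2 := prodInv' hk
  rw [Hh, X, D]
  linear_combination (-(t m k ^ 2)) * h1 + 2 * h2

lemma Y_sq {k m : ℕ} (hk : k ≤ m) : Y m k ^ 2 = X m k ^ 2 + 2 * D m := by
  have h2 := prodInv' hk
  rw [Y, X, D]
  linear_combination 4 * h2

lemma w_sq (m : ℕ) : (M m + 1) ^ 2 = (M m - 1) ^ 2 + D m := by
  have hb := b_eq m
  rw [M, D]
  linear_combination (-2 * a m) * hb

lemma M_big (m : ℕ) : 29400 ≤ M m := by
  obtain ⟨ha, hb, hh, hf⟩ := bounds m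
  calc (29400:ℤ) = 49 * 600 := by norm_num
  _ ≤ a m * f m := mul_le_mul ha hf (by norm_num) (by linarith)

/-- every element of `blk m k` has an explicit form `β + e * D` and an odd-part form. -/
lemma blk_mem_form {x : ℤ} {k m : ℕ} (hk : k ≤ m) (hx : x ∈ blk m k) :
    ∃ e : ℕ, e < 3 ∧ x = X m k ^ 2 + e * D m := by
  simp only [blk, Finset.mem_insert, Finset.mem_singleton] at hx
  rcases hx with rfl | rfl | rfl
  · exact ⟨0, by norm_num, by push_cast; ring⟩
  · exact ⟨1, by norm_num, by rw [Hh_sq hk]; push_cast; ring⟩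
  · exact ⟨2, by norm_num, by rw [Y_sq hk]; push_cast; ring⟩

lemma blk_mem_odd_form {x : ℤ} {k m : ℕ} (hk : k ≤ m) (hx : x ∈ blk m k) :
    ∃ u : ℤ, Odd u ∧ x = ((2:ℤ) ^ (m - k) * u) ^ 2 := by
  obtain ⟨w, hw, htw⟩ := t_decomp' hk
  obtain ⟨s, hs⟩ := even_b k
  have hob : ∃ c : ℤ, Even c ∧ b k = c := ⟨b k, even_b k, rfl⟩
  simp only [blk, Finset.mem_insert, Finset.mem_singleton] at hx
  rcases hx with rfl | rfl | rfl
  · exact ⟨(a k - b k) * w, ((odd_a k).sub_even (even_b k)).mul hw,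
      by rw [X, htw]; ring⟩
  · exact ⟨h k * w, (odd_h k).mul hw, by rw [Hh, htw]; ring⟩
  · exact ⟨(a k + b k) * w, ((odd_a k).add_even (even_b k)).mul hw,
      by rw [Y, htw]; ring⟩

lemma blk_card {k m : ℕ} (hk : k ≤ m) : (blk m k).card = 3 := by
  have hD := D_pos m
  have h1 := Hh_sq hk
  have h2 := Y_sq hk
  have e1 : X m k ^ 2 ≠ Hh m k ^ 2 := by intro hc; rw [h1] at hc; linarith
  have e2 : X m k ^ 2 ≠ Y m k ^ 2 := by intro hc; rw [h2] at hc; linarith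
  have e3 : Hh m k ^ 2 ≠ Y m k ^ 2 := by intro hc; rw [h1, h2] at hc; linarith
  rw [blk, Finset.card_insert_of_notMem (by simp [e1, e2]),
    Finset.card_insert_of_notMem (by simp [e3]), Finset.card_singleton]

lemma blk_disjoint {m : ℕ} : ∀ k ∈ Finset.range (m+1), ∀ j ∈ Finset.range (m+1),
    k ≠ j → Disjoint (blk m k) (blk m j) := by
  intro k hk j hj hne
  rw [Finset.mem_range] at hk hj
  rw [Finset.disjoint_left]
  intro x hxk hxj
  obtain ⟨u, hu, hxu⟩ := blk_mem_odd_form (by omega) hxk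
  obtain ⟨v, hv, hxv⟩ := blk_mem_odd_form (by omega) hxj
  exact pow_sq_ne hu hv (by omega) (hxu ▸ hxv)


lemma even_M (m : ℕ) : Even (M m) := ((parity m).2.2).mul_left _

lemma pair_ne (m : ℕ) : (M m - 1) ^ 2 ≠ (M m + 1) ^ 2 := by
  have := M_big m; intro hc; nlinarith

lemma top_lt_pair {m : ℕ} {x : ℤ} (hx : x ∈ blk m m) : x < (M m - 1) ^ 2 := by
  obtain ⟨e, he, hxe⟩ := blk_mem_form le_rfl hx
  have hY : x ≤ X m m ^ 2 + 2 * D m := by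
    have hD := D_pos m
    rw [hxe]
    have : (e : ℤ) ≤ 2 := by exact_mod_cast Nat.lt_succ_iff.mp he
    nlinarith
  have h1 : X m m ^ 2 + 2 * D m = (a m + b m) ^ 2 := by
    rw [← Y_sq le_rfl, Y, t_self]; ring
  have hlt : (a m + b m) ^ 2 < (M m - 1) ^ 2 := by
    obtain ⟨ha, hb, hh, hf⟩ := bounds m
    have hbe := b_eq m
    have hstep : a m + b m < M m - 1 := by
      rw [M]
      nlinarith [mul_le_mul (show (47:ℤ) ≤ a m - 2 by linarith)
        (show (599:ℤ) ≤ f m - 1 by linarith) (by norm_num) (by linarith)]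
    exact pow_lt_pow_left₀ hstep (by linarith) two_ne_zero
  linarith [hY, h1.le]

lemma blk_pair_disj {m k : ℕ} (hk : k ≤ m) {x : ℤ} (hx : x ∈ blk m k) :
    x ≠ (M m - 1) ^ 2 ∧ x ≠ (M m + 1) ^ 2 := by
  rcases eq_or_lt_of_le hk with heq | hlt
  · rw [heq] at hx
    have h1 := top_lt_pair hx
    have h2 : (M m - 1) ^ 2 < (M m + 1) ^ 2 := by have := M_big m; nlinarith
    exact ⟨by linarith, by linarith⟩
  · -- x is even, the pair elements are odd
    obtain ⟨u, hu, hxu⟩ := blk_mem_odd_form hk hx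
    have hd : 1 ≤ m - k := by omega
    have hex : Even x := by
      obtain ⟨d, hd'⟩ : ∃ d, m - k = d + 1 := ⟨m - k - 1, by omega⟩
      rw [hxu, hd']
      exact ⟨(2^d*u) * (2^d*u) * 2, by ring⟩
    have hoM : Odd (M m - 1) := (even_M m).sub_odd odd_one
    have hoM' : Odd (M m + 1) := (even_M m).add_one
    constructor
    · intro hc; rw [hc] at hex
      exact (Int.not_even_iff_odd.mpr (hoM.pow)) hex
    · intro hc; rw [hc] at hex
      exact (Int.not_even_iff_odd.mpr (hoM'.pow)) hex

lemma card_A (m : ℕ) : (A m).card = 3 * (m + 1) + 2 := by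
  rw [A, Finset.card_union_of_disjoint, Finset.card_biUnion blk_disjoint]
  · rw [Finset.sum_congr rfl (fun k hk => blk_card (by
      rw [Finset.mem_range] at hk; omega : k ≤ m)), Finset.sum_const, Finset.card_range,
      Finset.card_insert_of_notMem (by simpa using pair_ne m), Finset.card_singleton]
    ring
  · rw [Finset.disjoint_right]
    intro x hx hxb
    rw [Finset.mem_biUnion] at hxb
    obtain ⟨k, hk, hxk⟩ := hxb
    rw [Finset.mem_range] at hk
    have := blk_pair_disj (by omega : k ≤ m) hxk
    simp only [Finset.mem_insert, Finset.mem_singleton] at hx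
    rcases hx with rfl | rfl
    · exact this.1 rfl
    · exact this.2 rfl


def bet (m i : ℕ) : ℤ := if i ≤ m then X m i ^ 2 else (M m - 1) ^ 2
def lenf (m i : ℕ) : ℕ := if i ≤ m then 3 else 2

lemma mem_A_form {m : ℕ} {x : ℤ} (hx : x ∈ A m) :
    ∃ i e : ℕ, i ≤ m + 1 ∧ e < lenf m i ∧ x = bet m i + e * D m := by
  rw [A, Finset.mem_union] at hx
  rcases hx with hx | hx
  · rw [Finset.mem_biUnion] at hx
    obtain ⟨k, hk, hxk⟩ := hx
    rw [Finset.mem_range] at hk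
    have hkm : k ≤ m := by omega
    obtain ⟨e, he, hxe⟩ := blk_mem_form hkm hxk
    exact ⟨k, e, by omega, by simpa [lenf, hkm] using he, by simpa [bet, hkm] using hxe⟩
  · simp only [Finset.mem_insert, Finset.mem_singleton] at hx
    have hnm : ¬ (m + 1 ≤ m) := by omega
    rcases hx with rfl | rfl
    · exact ⟨m + 1, 0, le_rfl, by simp [lenf, hnm], by simp [bet, hnm]⟩
    · refine ⟨m + 1, 1, le_rfl, by simp [lenf, hnm], ?_⟩
      rw [w_sq m]; simp [bet, hnm]

def E (m : ℕ) : Finset ℤ :=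
  (Finset.range (m+2)).biUnion (fun j =>
    (Finset.range (j+1)).biUnion (fun i =>
      (Finset.range (lenf m i + lenf m j - 1)).image
        (fun e : ℕ => bet m i + bet m j + (e : ℤ) * D m)))

lemma lenf_ge (m i : ℕ) : 2 ≤ lenf m i := by
  rw [lenf]; split <;> omega

lemma add_subset_E (m : ℕ) : A m + A m ⊆ E m := by
  intro x hx
  rw [Finset.mem_add] at hx
  obtain ⟨y, hy, z, hz, hyz⟩ := hx
  obtain ⟨i, e, hi, he, hye⟩ := mem_A_form hy
  obtain ⟨j, e', hj, he', hze⟩ := mem_A_form hz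
  -- wlog i ≤ j
  rcases le_total i j with hij | hij
  · rw [E, Finset.mem_biUnion]
    refine ⟨j, Finset.mem_range.mpr (by omega), ?_⟩
    rw [Finset.mem_biUnion]
    refine ⟨i, Finset.mem_range.mpr (by omega), ?_⟩
    rw [Finset.mem_image]
    refine ⟨e + e', Finset.mem_range.mpr (by have := lenf_ge m i; have := lenf_ge m j; omega), ?_⟩
    rw [← hyz, hye, hze]; push_cast; ring
  · rw [E, Finset.mem_biUnion]
    refine ⟨i, Finset.mem_range.mpr (by omega), ?_⟩
    rw [Finset.mem_biUnion]
    refine ⟨j, Finset.mem_range.mpr (by omega), ?_⟩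
    rw [Finset.mem_image]
    refine ⟨e + e', Finset.mem_range.mpr (by have := lenf_ge m i; have := lenf_ge m j; omega), ?_⟩
    rw [← hyz, hye, hze]; push_cast; ring

lemma card_E_le (m : ℕ) :
    (E m).card ≤ 5 * (∑ j ∈ Finset.range (m+2), j) + 4 * m + 7 := by
  have step1 : (E m).card ≤
      ∑ j ∈ Finset.range (m+2), ∑ i ∈ Finset.range (j+1), (lenf m i + lenf m j - 1) := by
    refine le_trans (Finset.card_biUnion_le) (Finset.sum_le_sum fun j _ => ?_)
    refine le_trans (Finset.card_biUnion_le) (Finset.sum_le_sum fun i _ => ?_)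
    exact le_trans (Finset.card_image_le) (le_of_eq (Finset.card_range _))
  refine le_trans step1 (le_of_eq ?_)
  rw [Finset.sum_range_succ]
  have hinner_top : ∑ i ∈ Finset.range (m+2), (lenf m i + lenf m (m+1) - 1) = 4 * m + 7 := by
    have hl : lenf m (m+1) = 2 := by simp [lenf]
    rw [Finset.sum_range_succ, hl]
    have : ∀ i ∈ Finset.range (m+1), lenf m i + 2 - 1 = 4 := by
      intro i hi; rw [Finset.mem_range] at hi
      simp [lenf, show i ≤ m by omega]
    rw [Finset.sum_congr rfl this, Finset.sum_const, Finset.card_range]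
    simp [lenf]; omega
  have hinner : ∀ j ∈ Finset.range (m+1),
      ∑ i ∈ Finset.range (j+1), (lenf m i + lenf m j - 1) = 5 * (j + 1) := by
    intro j hj; rw [Finset.mem_range] at hj
    have : ∀ i ∈ Finset.range (j+1), lenf m i + lenf m j - 1 = 5 := by
      intro i hi; rw [Finset.mem_range] at hi
      simp [lenf, show i ≤ m by omega, show j ≤ m by omega]
    rw [Finset.sum_congr rfl this, Finset.sum_const, Finset.card_range]
    simp [smul_eq_mul]; ring
  rw [hinner_top, Finset.sum_congr rfl hinner]
  have hshift : ∑ j ∈ Finset.range (m+1), 5 * (j+1) = 5 * ∑ j ∈ Finset.range (m+2), j := by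
    rw [Finset.mul_sum, Finset.sum_range_succ' (fun j => 5 * j) (m+1)]
    simp
  rw [hshift]; ring

lemma card_add_le (m : ℕ) :
    ((A m + A m).card) * 2 ≤ 5 * (m+1)^2 + 13 * (m+1) + 6 := by
  have h1 : (A m + A m).card ≤ (E m).card := Finset.card_le_card (add_subset_E m)
  have h2 := card_E_le m
  have hG : (∑ j ∈ Finset.range (m+2), j) * 2 = (m+2) * (m+1) := by
    rw [Finset.sum_range_id_mul_two (m+2)]; congr 1
  have key : (5 * (∑ j ∈ Finset.range (m+2), j) + 4 * m + 7) * 2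
      = 5 * (m+1)^2 + 13 * (m+1) + 6 := by
    calc (5 * (∑ j ∈ Finset.range (m+2), j) + 4 * m + 7) * 2
        = 5 * ((∑ j ∈ Finset.range (m+2), j) * 2) + 8 * m + 14 := by ring
      _ = 5 * ((m+2) * (m+1)) + 8 * m + 14 := by rw [hG]
      _ = 5 * (m+1)^2 + 13 * (m+1) + 6 := by ring
  calc ((A m + A m).card) * 2 ≤ (5 * (∑ j ∈ Finset.range (m+2), j) + 4 * m + 7) * 2 := by
        have := le_trans h1 h2; omega
    _ = 5 * (m+1)^2 + 13 * (m+1) + 6 := key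

lemma sq_A (m : ℕ) : ∀ x ∈ A m, IsSquare x := by
  intro x hx
  rw [A, Finset.mem_union] at hx
  rcases hx with hx | hx
  · rw [Finset.mem_biUnion] at hx
    obtain ⟨k, _, hxk⟩ := hx
    simp only [blk, Finset.mem_insert, Finset.mem_singleton] at hxk
    rcases hxk with rfl | rfl | rfl
    · exact ⟨X m k, (sq _)⟩
    · exact ⟨Hh m k, (sq _)⟩
    · exact ⟨Y m k, (sq _)⟩
  · simp only [Finset.mem_insert, Finset.mem_singleton] at hx
    rcases hx with rfl | rfl
    · exact ⟨M m - 1, (sq _)⟩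
    · exact ⟨M m + 1, (sq _)⟩

end SqSumAux


/-- For `n ≥ 1` there is a set `A` of `3n + 2` integer squares with
`|A + A| ≤ (5n² + 13n + 6)/2`; in particular `N_{3n+2}(ℤ) ≤ (5n² + 13n + 6)/2`. -/
theorem sqSumsetMin_three_n_add_two_le (n : ℕ) (hn : 1 ≤ n) :
    (∃ A : Finset ℤ, (∀ a ∈ A, IsSquare a) ∧ A.card = 3 * n + 2 ∧
      (A + A).card ≤ (5 * n ^ 2 + 13 * n + 6) / 2) ∧
    sqSumsetMin ℤ (3 * n + 2) ≤ (5 * n ^ 2 + 13 * n + 6) / 2 := by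
  obtain ⟨m, rfl⟩ : ∃ m, n = m + 1 := ⟨n - 1, by omega⟩
  set A := SqSumAux.A m with hA
  have h1 : ∀ a ∈ A, IsSquare a := SqSumAux.sq_A m
  have h2 : A.card = 3 * (m + 1) + 2 := SqSumAux.card_A m
  have h3 : (A + A).card ≤ (5 * (m + 1) ^ 2 + 13 * (m + 1) + 6) / 2 := by
    rw [Nat.le_div_iff_mul_le (by norm_num : 0 < 2)]
    exact SqSumAux.card_add_le m
  exact ⟨⟨A, h1, h2, h3⟩,
    le_trans (Nat.sInf_le ⟨A, h1, h2, rfl⟩) h3⟩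
end

section
/- N_4(ℤ) = 8: every 4-element set A of perfect squares of integers satisfies |A+A| ≥ 8, and there exists a 4-element set A of perfect squares of integers (for example A = {49, 169, 289, 529}) with |A+A| = 8. -/
/-!
If `a < b < c < d` lie in `A` and `|A + A| ≤ 7`, then the seven sums
`a+a < a+b < a+c < a+d < b+d < c+d < d+d` exhaust `A + A`, and placing `b+b`, `b+c`, `c+c`
among them forces `a, b, c, d` to be an arithmetic progression. For a set of squares this is
excluded by Fermat's theorem, proved by descent. After dividing out the gcd, a progression
`p², q², r², s²` consists of odd squares, so `r = m + v`, `p = m - v`, `s = n + w`, `q = n - w`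
with `q² = m² + v²` and `m v = n w`. The four-number theorem writes `m = ad`, `v = cb`,
`n = ac`, `w = db`, whence `(a² - b²)(c² - d²) = 2abcd`, and coprimality leaves, up to symmetry,
`e² - f² = gh` and `h² - g² = 2ef`. Applying the four-number theorem to `(e - f)(e + f) = gh`
as `e - f = pr`, `e + f = qs`, `g = pq`, `h = rs` gives `2r² - q² = Tp²` and `2q² - r² = Ts²`
with `T ∣ 3`; `T = 3` is impossible mod `3`, and `T = 1` makes `p², r², q², s²` or its reverse
a progression of squares whose largest term is at most `max g h < s`.
-/

open Pointwise

theorem exists_four_factors_of_mul_eq_mul {α : Type*} [CommMonoidWithZero α]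
    [IsCancelMulZero α] [DecompositionMonoid α] {a b c d : α} (h : a * b = c * d) (hc : c ≠ 0) :
    ∃ p q r s, c = p * q ∧ a = p * r ∧ b = q * s ∧ d = r * s := by
  obtain ⟨p, q, ⟨r, rfl⟩, ⟨s, rfl⟩, rfl⟩ := exists_dvd_and_dvd_of_dvd_mul (Dvd.intro d h.symm)
  refine ⟨p, q, r, s, rfl, rfl, rfl, mul_left_cancel₀ hc ?_⟩
  rw [← h, mul_mul_mul_comm]

theorem Int.exists_pos_four_factors_of_mul_eq_mul {a b c d : ℤ} (h : a * b = c * d)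
    (ha : 0 < a) (hb : 0 < b) (hc : 0 < c) :
    ∃ p q r s, 0 < p ∧ 0 < q ∧ 0 < r ∧ 0 < s ∧
      c = p * q ∧ a = p * r ∧ b = q * s ∧ d = r * s := by
  obtain ⟨p, q, r, s, rfl, rfl, rfl, rfl⟩ := exists_four_factors_of_mul_eq_mul h hc.ne'
  have hd : 0 < r * s := pos_of_mul_pos_right (h ▸ mul_pos ha hb) hc.le
  refine ⟨|p|, |q|, |r|, |s|, abs_pos.mpr (left_ne_zero_of_mul hc.ne'),
    abs_pos.mpr (right_ne_zero_of_mul hc.ne'), abs_pos.mpr (right_ne_zero_of_mul ha.ne'),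
    abs_pos.mpr (right_ne_zero_of_mul hb.ne'), ?_, ?_, ?_, ?_⟩ <;>
  rw [← abs_mul, abs_of_pos ‹_›]

theorem IsCoprime.mul_sq_sub_sq {R : Type*} [CommRing R] {a b : R} (h : IsCoprime a b) :
    IsCoprime (a * b) (a ^ 2 - b ^ 2) := by
  refine IsCoprime.mul_left ?_ ?_
  · convert (h.pow_right (n := 2)).neg_right.add_mul_left_right a using 1
    ring
  · convert (h.symm.pow_right (n := 2)).add_mul_left_right (-b) using 1
    ring

theorem Int.sq_emod_four (x : ℤ) : x ^ 2 % 4 = x % 2 := by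
  obtain ⟨k, rfl | rfl⟩ := Int.even_or_odd' x
  · have : (2 * k) ^ 2 = 4 * k ^ 2 := by ring
    omega
  · have : (2 * k + 1) ^ 2 = 4 * (k ^ 2 + k) + 1 := by ring
    omega

theorem Int.emod_two_eq_one_or_of_isCoprime {a b : ℤ} (h : IsCoprime a b) :
    a % 2 = 1 ∨ b % 2 = 1 := by
  by_contra! hab
  have := Int.isUnit_iff.mp <| h.isUnit_of_dvd' (show 2 ∣ a by omega) (show 2 ∣ b by omega)
  omega

theorem Int.three_dvd_of_three_dvd_sq_add_sq {x y : ℤ} (h : 3 ∣ x ^ 2 + y ^ 2) : 3 ∣ x := by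
  have key : ∀ a b : ZMod 3, a ^ 2 + b ^ 2 = 0 → a = 0 := by decide
  have h3 := (ZMod.intCast_zmod_eq_zero_iff_dvd (x ^ 2 + y ^ 2) 3).mpr h
  push_cast at h3
  exact (ZMod.intCast_zmod_eq_zero_iff_dvd x 3).mp (key _ _ h3)

theorem Int.eq_of_mul_eq_two {x y : ℤ} (h : x * y = 2) :
    x = 1 ∧ y = 2 ∨ x = 2 ∧ y = 1 ∨ x = -1 ∧ y = -2 ∨ x = -2 ∧ y = -1 := by
  have hx : x ≤ 2 := Int.le_of_dvd two_pos ⟨y, h.symm⟩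
  have hx' : -2 ≤ x := neg_le.mp (Int.le_of_dvd two_pos ⟨-y, by rw [← h]; ring⟩)
  interval_cases x <;> omega

structure IsFourSqAP (p q r s : ℤ) : Prop where
  nonneg : 0 ≤ p
  lt₁ : p < q
  lt₂ : q < r
  lt₃ : r < s
  sq₁ : p ^ 2 + r ^ 2 = 2 * q ^ 2
  sq₂ : q ^ 2 + s ^ 2 = 2 * r ^ 2

namespace IsFourSqAP

variable {p q r s : ℤ}

theorem of_sq_lt_sq (hp : 0 ≤ p) (hq : 0 ≤ q) (hr : 0 ≤ r) (hs : 0 ≤ s) (hpq : p ^ 2 < q ^ 2)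
    (h₁ : p ^ 2 + r ^ 2 = 2 * q ^ 2) (h₂ : q ^ 2 + s ^ 2 = 2 * r ^ 2) : IsFourSqAP p q r s where
  nonneg := hp
  lt₁ := lt_of_pow_lt_pow_left₀ 2 hq hpq
  lt₂ := lt_of_pow_lt_pow_left₀ 2 hr (by linarith)
  lt₃ := lt_of_pow_lt_pow_left₀ 2 hs (by linarith)
  sq₁ := h₁
  sq₂ := h₂

theorem of_mul {k : ℤ} (hk : 0 < k) (h : IsFourSqAP (p * k) (q * k) (r * k) (s * k)) :
    IsFourSqAP p q r s where
  nonneg := (mul_nonneg_iff_of_pos_right hk).mp h.nonneg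
  lt₁ := lt_of_mul_lt_mul_right h.lt₁ hk.le
  lt₂ := lt_of_mul_lt_mul_right h.lt₂ hk.le
  lt₃ := lt_of_mul_lt_mul_right h.lt₃ hk.le
  sq₁ := mul_right_cancel₀ (pow_ne_zero 2 hk.ne') (by linear_combination h.sq₁)
  sq₂ := mul_right_cancel₀ (pow_ne_zero 2 hk.ne') (by linear_combination h.sq₂)

end IsFourSqAP

theorem exists_isFourSqAP_of_sq_sub_sq {e f g h : ℤ} (he : 0 < e) (hf : 0 < f) (hg : 0 < g)
    (hh : 0 < h) (hef : IsCoprime e f) (hgh : IsCoprime g h) (h₁ : e ^ 2 - f ^ 2 = g * h)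
    (h₂ : h ^ 2 - g ^ 2 = 2 * e * f) : ∃ p q r s, IsFourSqAP p q r s ∧ s ≤ max g h := by
  have hfe : f < e := by nlinarith [mul_pos hg hh]
  -- A difference of two squares is never `2 mod 4`, so `e` and `f` are not both odd.
  have hsum : (e + f) % 2 = 1 := by
    have := Int.emod_two_eq_one_or_of_isCoprime hef
    by_contra hodd
    obtain ⟨i, rfl⟩ : Odd e := Int.odd_iff.mpr (by omega)
    obtain ⟨j, rfl⟩ : Odd f := Int.odd_iff.mpr (by omega)
    have : h ^ 2 - g ^ 2 = 4 * (2 * (i * j) + i + j) + 2 := by rw [h₂]; ring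
    have := Int.sq_emod_four g
    have := Int.sq_emod_four h
    omega
  have hcop : IsCoprime (e - f) (e + f) := by
    obtain ⟨t, ht⟩ : ∃ t, e + f = 2 * t + 1 := ⟨(e + f) / 2, by omega⟩
    have h2 : IsCoprime 2 (e + f) := ⟨-t, 1, by rw [ht]; ring⟩
    have hf : IsCoprime f (e + f) := by simpa using hef.symm.add_mul_left_right 1
    have := (h2.mul_left hf).neg_left.add_mul_right_left 1
    rwa [show -(2 * f) + 1 * (e + f) = e - f by ring] at this
  obtain ⟨p, q, r, s, hp, hq, hr, hs, rfl, hpr, hqs, rfl⟩ :=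
    Int.exists_pos_four_factors_of_mul_eq_mul (a := e - f) (b := e + f) (d := h)
      (by linear_combination h₁) (by omega) (by omega) hg
  have hps : IsCoprime p s := hgh.mono (dvd_mul_right p q) (dvd_mul_left s r)
  have hrq : IsCoprime r q := hgh.symm.mono (dvd_mul_right r s) (dvd_mul_left q p)
  have key : s ^ 2 * (2 * r ^ 2 - q ^ 2) = p ^ 2 * (2 * q ^ 2 - r ^ 2) := by
    linear_combination 2 * h₂ + (q * s + e + f) * hqs - (p * r + e - f) * hpr
  obtain ⟨T, hT⟩ : p ^ 2 ∣ 2 * r ^ 2 - q ^ 2 :=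
    (hps.pow (m := 2) (n := 2)).dvd_of_dvd_mul_left ⟨_, key⟩
  have hT' : 2 * q ^ 2 - r ^ 2 = s ^ 2 * T :=
    mul_left_cancel₀ (pow_ne_zero 2 hp.ne') (by linear_combination -key + s ^ 2 * hT)
  have hTpos : 0 < T := by
    have : r ^ 2 + q ^ 2 = (p ^ 2 + s ^ 2) * T := by linear_combination hT + hT'
    exact pos_of_mul_pos_right (by rw [← this]; positivity) (by positivity)
  have hT3 : T ∣ 3 := by
    obtain ⟨u, w, huw⟩ := hrq.pow (m := 2) (n := 2)
    exact ⟨u * (2 * p ^ 2 + s ^ 2) + w * (p ^ 2 + 2 * s ^ 2),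
      by linear_combination -3 * huw + 2 * u * hT + u * hT' + w * hT + 2 * w * hT'⟩
  have := Int.le_of_dvd three_pos hT3
  interval_cases T
  · rcases lt_trichotomy p r with hlt | rfl | hgt
    · refine ⟨p, r, q, s, .of_sq_lt_sq hp.le hr.le hq.le hs.le
        (pow_lt_pow_left₀ hlt hp.le two_ne_zero) (by linear_combination -hT)
        (by linear_combination -hT'), le_max_of_le_right (le_mul_of_one_le_left hs.le hr)⟩
    · have hqp : q = p := (pow_left_inj₀ hq.le hp.le two_ne_zero).mp (by linear_combination -hT)
      subst hqp
      have hsq : s = q := (pow_left_inj₀ hs.le hq.le two_ne_zero).mp (by linear_combination -hT')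
      subst hsq
      linarith
    · have := pow_lt_pow_left₀ hgt hr.le two_ne_zero
      refine ⟨s, q, r, p, .of_sq_lt_sq hs.le hq.le hr.le hp.le (by linarith)
        (by linear_combination -hT') (by linear_combination -hT),
        le_max_of_le_left (le_mul_of_one_le_right hp.le hq)⟩
  · norm_num at hT3
  · have h3 : 3 ∣ r ^ 2 + q ^ 2 := ⟨p ^ 2 + s ^ 2, by linear_combination hT + hT'⟩
    have := Int.isUnit_iff.mp <| hrq.isUnit_of_dvd' (Int.three_dvd_of_three_dvd_sq_add_sq h3)
      (Int.three_dvd_of_three_dvd_sq_add_sq (add_comm (r ^ 2) (q ^ 2) ▸ h3))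
    omega

theorem exists_isFourSqAP_of_sq_sub_sq_mul_sq_sub_sq {a b c d : ℤ} (ha : 0 < a) (hb : 0 < b)
    (hc : 0 < c) (hd : 0 < d) (hab : IsCoprime a b) (hcd : IsCoprime c d)
    (h : (a ^ 2 - b ^ 2) * (c ^ 2 - d ^ 2) = 2 * a * b * c * d) :
    ∃ p q r s, IsFourSqAP p q r s ∧ s ≤ max (max a b) (max c d) := by
  obtain ⟨X, hX⟩ : a * b ∣ c ^ 2 - d ^ 2 :=
    hab.mul_sq_sub_sq.dvd_of_dvd_mul_left ⟨2 * c * d, by linear_combination h⟩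
  obtain ⟨Y, hY⟩ : c * d ∣ a ^ 2 - b ^ 2 :=
    hcd.mul_sq_sub_sq.dvd_of_dvd_mul_right ⟨2 * a * b, by linear_combination h⟩
  have hXY : X * Y = 2 := mul_left_cancel₀ (by positivity : a * b * c * d ≠ 0)
    (by linear_combination h - (a ^ 2 - b ^ 2) * hX - a * b * X * hY)
  rcases Int.eq_of_mul_eq_two hXY with ⟨rfl, rfl⟩ | ⟨rfl, rfl⟩ | ⟨rfl, rfl⟩ | ⟨rfl, rfl⟩
  · obtain ⟨p, q, r, s, hs, hle⟩ := exists_isFourSqAP_of_sq_sub_sq hc hd hb ha hcd hab.symm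
      (by linear_combination hX) (by linear_combination hY)
    exact ⟨p, q, r, s, hs, by omega⟩
  · obtain ⟨p, q, r, s, hs, hle⟩ := exists_isFourSqAP_of_sq_sub_sq ha hb hd hc hab hcd.symm
      (by linear_combination hY) (by linear_combination hX)
    exact ⟨p, q, r, s, hs, by omega⟩
  · obtain ⟨p, q, r, s, hs, hle⟩ := exists_isFourSqAP_of_sq_sub_sq hd hc ha hb hcd.symm hab
      (by linear_combination -hX) (by linear_combination -hY)
    exact ⟨p, q, r, s, hs, by omega⟩
  · obtain ⟨p, q, r, s, hs, hle⟩ := exists_isFourSqAP_of_sq_sub_sq hb ha hc hd hab.symm hcd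
      (by linear_combination -hY) (by linear_combination -hX)
    exact ⟨p, q, r, s, hs, by omega⟩

namespace IsFourSqAP

variable {p q r s : ℤ}

theorem exists_lt_of_isCoprime (h : IsFourSqAP p q r s) (hpq : IsCoprime p q) :
    ∃ p' q' r' s', IsFourSqAP p' q' r' s' ∧ s' < s := by
  have h₁ := h.sq₁
  have h₂ := h.sq₂
  -- Squares are `0` or `1 mod 4`, so all four terms of the primitive progression are odd.
  have := Int.emod_two_eq_one_or_of_isCoprime hpq
  have := Int.sq_emod_four p
  have := Int.sq_emod_four q
  have := Int.sq_emod_four r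
  have := Int.sq_emod_four s
  obtain ⟨v, rfl⟩ : ∃ v, r = p + 2 * v := ⟨(r - p) / 2, by omega⟩
  obtain ⟨w, rfl⟩ : ∃ w, s = q + 2 * w := ⟨(s - q) / 2, by omega⟩
  have hv : 0 < v := by linarith [h.lt₁, h.lt₂]
  have hw : 0 < w := by linarith [h.lt₂, h.lt₃]
  have hq : q ^ 2 = (p + v) ^ 2 + v ^ 2 := by linarith
  have hmv : (p + v) * v = (q + w) * w := by linarith
  have hcop : IsCoprime (p + v) v := by
    refine IsRelPrime.isCoprime fun k hkm hkv ↦ hpq.isUnit_of_dvd' ?_ ?_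
    · simpa using dvd_sub hkm hkv
    · exact (Int.pow_dvd_pow_iff two_ne_zero).mp
        (hq ▸ dvd_add (pow_dvd_pow_of_dvd hkm 2) (pow_dvd_pow_of_dvd hkv 2))
  obtain ⟨a, c, d, b, ha, hc, hd, hb, hn, hm, rfl, rfl⟩ :=
    Int.exists_pos_four_factors_of_mul_eq_mul hmv (by linarith [h.nonneg]) hv
      (by linarith [h.lt₁, h.nonneg])
  have hab : IsCoprime a b := hcop.mono (Dvd.intro d hm.symm) (dvd_mul_left b c)
  have hcd : IsCoprime c d := (hcop.mono (Dvd.intro_left a hm.symm) (dvd_mul_right c b)).symm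
  obtain ⟨p', q', r', s', h', hs'⟩ := exists_isFourSqAP_of_sq_sub_sq_mul_sq_sub_sq ha hb hc hd
    hab hcd (by linear_combination hq - (a * c - d * b + q) * hn + (p + c * b + a * d) * hm)
  have := le_mul_of_one_le_right ha.le hd
  have := le_mul_of_one_le_left hd.le ha
  have := le_mul_of_one_le_right hc.le hb
  have := le_mul_of_one_le_left hb.le hc
  have := h.nonneg
  have := h.lt₃
  exact ⟨p', q', r', s', h', by omega⟩

theorem exists_lt (h : IsFourSqAP p q r s) : ∃ p' q' r' s', IsFourSqAP p' q' r' s' ∧ s' < s := by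
  have hq : q ≠ 0 := by linarith [h.nonneg, h.lt₁]
  obtain ⟨k, p₀, q₀, hk, hpq, rfl, rfl⟩ := Int.exists_gcd_one' (Int.gcd_pos_of_ne_zero_right p hq)
  obtain ⟨r₀, rfl⟩ : (k : ℤ) ∣ r := (Int.pow_dvd_pow_iff two_ne_zero).mp
    ⟨2 * q₀ ^ 2 - p₀ ^ 2, by linear_combination h.sq₁⟩
  obtain ⟨s₀, rfl⟩ : (k : ℤ) ∣ s := (Int.pow_dvd_pow_iff two_ne_zero).mp
    ⟨2 * r₀ ^ 2 - q₀ ^ 2, by linear_combination h.sq₂⟩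
  rw [mul_comm (k : ℤ) r₀, mul_comm (k : ℤ) s₀] at h
  have h₀ := h.of_mul (by exact_mod_cast hk)
  obtain ⟨p', q', r', s', h', hlt⟩ :=
    h₀.exists_lt_of_isCoprime (Int.isCoprime_iff_gcd_eq_one.mpr hpq)
  have hk₁ : (1 : ℤ) ≤ k := by omega
  refine ⟨p', q', r', s', h', hlt.trans_le (le_mul_of_one_le_left ?_ hk₁)⟩
  linarith [h₀.nonneg, h₀.lt₁, h₀.lt₂, h₀.lt₃]

end IsFourSqAP

theorem not_isFourSqAP {p q r s : ℤ} : ¬IsFourSqAP p q r s := by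
  intro h
  induction hn : s.toNat using Nat.strong_induction_on generalizing p q r s with
  | _ n ih =>
    obtain ⟨p', q', r', s', h', hlt⟩ := h.exists_lt
    have := h'.nonneg
    have := h'.lt₁
    have := h'.lt₂
    have := h'.lt₃
    exact ih _ (by omega) h' rfl

theorem Finset.add_eq_two_mul_of_card_add_self_le_seven {A : Finset ℤ} {a b c d : ℤ}
    (ha : a ∈ A) (hb : b ∈ A) (hc : c ∈ A) (hd : d ∈ A) (hab : a < b) (hbc : b < c) (hcd : c < d)
    (hA : (A + A).card ≤ 7) : a + c = 2 * b ∧ b + d = 2 * c := by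
  set S : Finset ℤ := {a + a, a + b, a + c, a + d, b + d, c + d, d + d}
  have hsub : S ⊆ A + A := by
    simp only [S, Finset.insert_subset_iff, Finset.singleton_subset_iff]
    exact ⟨add_mem_add ha ha, add_mem_add ha hb, add_mem_add ha hc, add_mem_add ha hd,
      add_mem_add hb hd, add_mem_add hc hd, add_mem_add hd hd⟩
  have hS : S.card = 7 := by
    simp only [S]
    repeat rw [Finset.card_insert_of_notMem (by simp; omega)]
    rfl
  have hSA : S = A + A := Finset.eq_of_subset_of_card_le hsub (by omega)
  have hbb : b + b ∈ S := hSA ▸ add_mem_add hb hb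
  have hbc' : b + c ∈ S := hSA ▸ add_mem_add hb hc
  have hcc : c + c ∈ S := hSA ▸ add_mem_add hc hc
  simp only [S, Finset.mem_insert, Finset.mem_singleton] at hbb hbc' hcc
  omega

theorem Finset.le_card_add_self_of_isSquare {A : Finset ℤ} (hA : ∀ a ∈ A, IsSquare a)
    (hcard : A.card = 4) : 8 ≤ (A + A).card := by
  by_contra! hlt
  set f := A.orderEmbOfFin hcard
  have hroot (i : Fin 4) : ∃ x : ℤ, 0 ≤ x ∧ f i = x ^ 2 := by
    obtain ⟨x, hx⟩ := (isSquare_iff_exists_sq _).mp (hA _ (A.orderEmbOfFin_mem hcard i))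
    exact ⟨|x|, abs_nonneg x, by rw [sq_abs, hx]⟩
  obtain ⟨x₀, hx₀, h₀⟩ := hroot 0
  obtain ⟨x₁, hx₁, h₁⟩ := hroot 1
  obtain ⟨x₂, hx₂, h₂⟩ := hroot 2
  obtain ⟨x₃, hx₃, h₃⟩ := hroot 3
  have hlt₀₁ : f 0 < f 1 := f.strictMono (by decide)
  obtain ⟨hap₁, hap₂⟩ := A.add_eq_two_mul_of_card_add_self_le_seven (A.orderEmbOfFin_mem hcard 0)
    (A.orderEmbOfFin_mem hcard 1) (A.orderEmbOfFin_mem hcard 2) (A.orderEmbOfFin_mem hcard 3)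
    hlt₀₁ (f.strictMono (by decide)) (f.strictMono (by decide)) (by omega)
  rw [h₀, h₁, h₂] at hap₁
  rw [h₁, h₂, h₃] at hap₂
  rw [h₀, h₁] at hlt₀₁
  exact not_isFourSqAP (.of_sq_lt_sq hx₀ hx₁ hx₂ hx₃ hlt₀₁ hap₁ hap₂)

/-- `N_4(ℤ) = 8`: every 4-element set of integer squares has `|A + A| ≥ 8`, and some
4-element set of integer squares (e.g. `{49, 169, 289, 529}`) attains `|A + A| = 8`. -/
theorem sqSumsetMin_int_four :
    (∀ A : Finset ℤ, (∀ a ∈ A, IsSquare a) → A.card = 4 → 8 ≤ (A + A).card) ∧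
    (∃ A : Finset ℤ, (∀ a ∈ A, IsSquare a) ∧ A.card = 4 ∧ (A + A).card = 8) ∧
    sqSumsetMin ℤ 4 = 8 := by
  have hex : ∃ A : Finset ℤ, (∀ a ∈ A, IsSquare a) ∧ A.card = 4 ∧ (A + A).card = 8 := by
    refine ⟨{7 ^ 2, 13 ^ 2, 17 ^ 2, 23 ^ 2}, ?_, by decide, by decide⟩
    simp only [Finset.mem_insert, Finset.mem_singleton]
    rintro a (rfl | rfl | rfl | rfl) <;> exact IsSquare.sq _
  refine ⟨fun A ↦ A.le_card_add_self_of_isSquare, hex,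
    le_antisymm (Nat.sInf_le hex) (le_csInf ⟨8, hex⟩ ?_)⟩
  rintro k ⟨A, hA, hcard, rfl⟩
  exact A.le_card_add_self_of_isSquare hA hcard
end

section
/- The 7-element set of integer squares A = {23^2, 205^2, 289^2, 373^2, 425^2, 527^2, 565^2} satisfies |A+A| = 19. In particular N_7(ℤ) ≤ 19, which is strictly less than the bound N_7(ℤ) ≤ 20 obtained from the arithmetic-progression construction. -/
open Pointwise

/-- The seven squares appearing in the `3 × 3` magic square with seven square entries. -/
def magicSquares : Finset ℤ :=
  {23 ^ 2, 205 ^ 2, 289 ^ 2, 373 ^ 2, 425 ^ 2, 527 ^ 2, 565 ^ 2}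

lemma magic_sq : ∀ a ∈ magicSquares, IsSquare a := by
  simp only [magicSquares, Finset.mem_insert, Finset.mem_singleton]
  rintro a (rfl|rfl|rfl|rfl|rfl|rfl|rfl) <;> exact ⟨_, sq _⟩

lemma magic_card : magicSquares.card = 7 := by decide

lemma magic_add_card : (magicSquares + magicSquares).card = 19 := by decide

/-- The 7-element set of integer squares
`A = {23², 205², 289², 373², 425², 527², 565²}` satisfies `|A + A| = 19`; in particular
`N_7(ℤ) ≤ 19 < 20`. -/
theorem sqSumsetMin_int_seven_le :
    (∀ a ∈ magicSquares, IsSquare a) ∧ magicSquares.card = 7 ∧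
    (magicSquares + magicSquares).card = 19 ∧
    sqSumsetMin ℤ 7 ≤ 19 ∧ (19 : ℕ) < 20 := by
  refine ⟨magic_sq, magic_card, magic_add_card, ?_, by norm_num⟩
  exact Nat.sInf_le ⟨magicSquares, magic_sq, magic_card, magic_add_card⟩
end

section
/- Let n ≥ 3 be a natural number and let p be a prime with p > 2^(2^(2^(2^(2^(9+n))))). Then N_n(ℤ_p) = 2n - 1; that is, the minimum of |A+A| over all n-element subsets A of the set of squares of the field ℤ/pℤ equals 2n - 1. -/
/-!
The lower bound `2n - 1 ≤ |A + A|` is Cauchy–Davenport. For the upper bound it suffices to find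
`n` consecutive squares `x + i`, `i < n`, since they form an arithmetic progression. With `χ` the
quadratic character, `∑ₓ ∏_{c ∈ T} (1 + χ (x - c))` equals `p` plus `2^|T| - 1` character sums
`∑ₓ χ (∏_{c ∈ S} (x - c))`; once each is below `p / 2^|T|` the total is positive, and a nonzero
term gives an `x` with all `x - c` squares.

The character sums are bounded by Stepanov's method. Let `f` have a root of odd multiplicity,
`f 0 ≠ 0`, and `h = p / 2`. Choose `u_j, v_j` of degree `≤ D`, not all zero, such that
`F = ∑_{j < J} X^{jp} (f^M u_j + f^{M+h} v_j)` has its first `M` Hasse derivatives vanishing on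
`{a | f a ^ h = ε}`: there `X^{jp}` acts as `X^j` and `f^h` as `ε`, so this is a system of
`M (J + D + M deg f)` linear equations in `2J(D + 1)` unknowns. Since `f^p ≡ f 0` modulo `X^p`, a
relation `X^p ∣ u + f^h v` would force `f u² = f 0 · v²`, impossible by the odd root; so `F ≠ 0`
and `M · #{a | f a ^ h = ε} ≤ deg F`. For `ε = ±1`, `M = 2K`, `J = K + 1` and `D ≈ p / 2` this
gives `|∑ₐ χ (f a)| ≲ (deg f + 1) p / (2K)`.
-/

open Pointwise

open Polynomial Finset Module

namespace Polynomial

theorem hasseDeriv_X_pow_mul_char_eq_zero {R : Type*} [CommRing R] (p : ℕ) [Fact p.Prime]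
    [CharP R p] (j : ℕ) {b : ℕ} (hb₀ : 0 < b) (hbp : b < p) :
    hasseDeriv b (X ^ (j * p) : R[X]) = 0 := by
  have hchoose : (j * p).choose b ≡ 0 [MOD p] := by
    have := Choose.choose_modEq_choose_mod_mul_choose_div_nat (n := j * p) (k := b) (p := p)
    rwa [Nat.mul_mod_left, Nat.mod_eq_of_lt hbp, Nat.choose_eq_zero_of_lt hb₀, zero_mul] at this
  rw [← monomial_one_right_eq_X_pow, hasseDeriv_monomial,
    (CharP.cast_eq_zero_iff R p _).mpr (Nat.modEq_zero_iff_dvd.mp hchoose), zero_mul, map_zero]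

theorem hasseDeriv_X_pow_mul_char_mul {R : Type*} [CommRing R] (p : ℕ) [Fact p.Prime]
    [CharP R p] (j : ℕ) {k : ℕ} (hk : k < p) (g : R[X]) :
    hasseDeriv k (X ^ (j * p) * g) = X ^ (j * p) * hasseDeriv k g := by
  rw [hasseDeriv_mul, Finset.sum_eq_single (0, k)]
  · simp
  · rintro ⟨a, b⟩ hab hne
    have hab : a + b = k := mem_antidiagonal.mp hab
    rw [hasseDeriv_X_pow_mul_char_eq_zero p j (by grind) (by omega), zero_mul]
  · simp

theorem pow_sub_dvd_hasseDeriv_pow {R : Type*} [CommRing R] (f : R[X]) (N i : ℕ) :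
    f ^ (N - i) ∣ hasseDeriv i (f ^ N) := by
  induction N generalizing i with
  | zero => simp
  | succ N ih =>
    rw [pow_succ', hasseDeriv_mul]
    refine Finset.dvd_sum fun ⟨a, b⟩ hab => ?_
    have hab : a + b = i := mem_antidiagonal.mp hab
    rcases Nat.eq_zero_or_pos a with rfl | ha
    · rw [hasseDeriv_zero']
      exact (pow_dvd_pow f (by omega)).trans (pow_succ' f _ ▸ mul_dvd_mul_left f (ih b))
    · exact (pow_dvd_pow f (by omega)).trans ((ih b).mul_left _)

theorem pow_dvd_of_hasseDeriv_eval_eq_zero {R : Type*} [CommRing R] {F : R[X]} {a : R} {M : ℕ}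
    (h : ∀ k < M, (hasseDeriv k F).eval a = 0) : (X - C a) ^ M ∣ F := by
  conv_rhs => rw [← sum_taylor_eq F a]
  refine Finset.dvd_sum fun i _ => ?_
  by_cases hi : i < M
  · simp [taylor_coeff, h i hi]
  · exact (pow_dvd_pow _ (not_lt.mp hi)).mul_left _

theorem eq_zero_of_sum_X_pow_mul_eq_zero {R : Type*} [CommRing R] {J N : ℕ}
    (w : Fin J → R[X]) (hw : ∀ j, X ^ N ∣ w j → w j = 0)
    (h : ∑ j : Fin J, X ^ ((j : ℕ) * N) * w j = 0) : ∀ j, w j = 0 := by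
  induction J with
  | zero => exact fun j => j.elim0
  | succ J ih =>
    have hrest : ∑ j : Fin J, X ^ ((j.succ : ℕ) * N) * w j.succ
        = X ^ N * ∑ j : Fin J, X ^ ((j : ℕ) * N) * w j.succ := by
      rw [Finset.mul_sum]
      refine Finset.sum_congr rfl fun j _ => ?_
      rw [Fin.val_succ, add_one_mul, pow_add]
      ring
    rw [Fin.sum_univ_succ, hrest, Fin.val_zero, zero_mul, pow_zero, one_mul] at h
    have h0 : w 0 = 0 := hw 0 ((dvd_add_left (dvd_mul_right _ _)).mp (h ▸ dvd_zero _))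
    rw [h0, zero_add] at h
    exact Fin.cases h0
      (ih _ (fun j => hw j.succ) ((isRegular_X_pow N).left (h.trans (mul_zero _).symm)))

theorem eq_zero_of_mul_sq_eq_C_mul_sq {R : Type*} [CommRing R] [IsDomain R] {f u v : R[X]}
    {a c : R} (ha : Odd (f.rootMultiplicity a)) (hc : c ≠ 0) (h : f * u ^ 2 = C c * v ^ 2) :
    u = 0 ∧ v = 0 := by
  have hf : f ≠ 0 := by rintro rfl; simp at ha
  by_cases hv : v = 0
  · subst hv
    simpa [hf] using h
  have hu : u ≠ 0 := by rintro rfl; simp [hc, hv] at h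
  have hmult := congrArg (rootMultiplicity a) h
  rw [rootMultiplicity_mul (by simp [hf, hu]), rootMultiplicity_mul (by simp [hc, hv]),
    rootMultiplicity_C, sq, sq, rootMultiplicity_mul (by simp [hu]),
    rootMultiplicity_mul (by simp [hv])] at hmult
  exact absurd ha
    (Nat.not_odd_iff_even.mpr ⟨rootMultiplicity a v - rootMultiplicity a u, by omega⟩)

variable {K : Type*} [Field K]

theorem card_mul_le_natDegree_of_pow_dvd {F : K[X]} (hF : F ≠ 0) (s : Finset K) {M : ℕ}
    (h : ∀ a ∈ s, (X - C a) ^ M ∣ F) : #s * M ≤ F.natDegree := by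
  have hcop : (s : Set K).Pairwise (Function.onFun IsCoprime fun a => (X - C a) ^ M) :=
    fun a _ b _ hab => (isCoprime_X_sub_C_of_isUnit_sub (sub_ne_zero.mpr hab).isUnit).pow
  have hdeg := natDegree_le_of_dvd (Finset.prod_dvd_of_coprime hcop h) hF
  rw [natDegree_prod _ _ fun a _ => pow_ne_zero _ (X_sub_C_ne_zero a)] at hdeg
  simpa using hdeg

theorem finrank_degreeLT (D : ℕ) : finrank K (degreeLT K D) = D := by
  simp [finrank_eq_card_basis (degreeLT.basis K D)]

theorem exists_ne_zero_forall_eq_zero_of_natDegree_lt {V : Type*} [AddCommGroup V] [Module K V]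
    [FiniteDimensional K V] {M E : ℕ} (W : Fin M → V →ₗ[K] K[X])
    (hW : ∀ k x, (W k x).natDegree < E) (hdim : M * E < finrank K V) :
    ∃ x ≠ 0, ∀ k, W k x = 0 := by
  let L : V →ₗ[K] (Fin M × Fin E → K) := LinearMap.pi fun ke => lcoeff K ke.2 ∘ₗ W ke.1
  have hL : finrank K (Fin M × Fin E → K) < finrank K V := by simpa using hdim
  obtain ⟨x, hx, hx0⟩ := (Submodule.ne_bot_iff _).mp (LinearMap.ker_ne_bot_of_finrank_lt hL)
  refine ⟨x, hx0, fun k => ext fun e => ?_⟩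
  by_cases he : e < E
  · simpa [L] using congr_fun (LinearMap.mem_ker (f := L).mp hx) (k, ⟨e, he⟩)
  · exact coeff_eq_zero_of_natDegree_lt ((hW k x).trans_le (not_lt.mp he))

noncomputable def hasseDerivCofactor (f : K[X]) (N k : ℕ) : K[X] →ₗ[K] K[X] :=
  ∑ x ∈ antidiagonal k, LinearMap.mulLeft K
    (f ^ (k - x.1) * (hasseDeriv x.1 (f ^ N) / f ^ (N - x.1))) ∘ₗ hasseDeriv x.2

theorem hasseDeriv_pow_mul {f : K[X]} (hf : f ≠ 0) {N k : ℕ} (hk : k ≤ N) (g : K[X]) :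
    hasseDeriv k (f ^ N * g) = f ^ (N - k) * hasseDerivCofactor f N k g := by
  simp only [hasseDeriv_mul, hasseDerivCofactor, LinearMap.sum_apply, LinearMap.comp_apply,
    LinearMap.mulLeft_apply, Finset.mul_sum]
  refine Finset.sum_congr rfl fun ⟨a, b⟩ hab => ?_
  have hab : a + b = k := mem_antidiagonal.mp hab
  rw [← mul_assoc, ← mul_assoc, ← pow_add, show N - k + (k - a) = N - a by omega,
    EuclideanDomain.mul_div_cancel' (pow_ne_zero _ hf) (pow_sub_dvd_hasseDeriv_pow f N a)]

theorem natDegree_hasseDerivCofactor_le {f : K[X]} (hf : f ≠ 0) {N k : ℕ} (hk : k ≤ N)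
    (g : K[X]) :
    (hasseDerivCofactor f N k g).natDegree ≤ g.natDegree + k * f.natDegree := by
  simp only [hasseDerivCofactor, LinearMap.sum_apply, LinearMap.comp_apply,
    LinearMap.mulLeft_apply]
  refine natDegree_sum_le_of_forall_le _ _ fun ⟨a, b⟩ hab => ?_
  have hab : a + b = k := mem_antidiagonal.mp hab
  set q := hasseDeriv a (f ^ N) / f ^ (N - a)
  have hq : q.natDegree ≤ a * f.natDegree := by
    rcases eq_or_ne q 0 with hq0 | hq0
    · simp [hq0]
    have hmul : f ^ (N - a) * q = hasseDeriv a (f ^ N) :=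
      EuclideanDomain.mul_div_cancel' (pow_ne_zero _ hf) (pow_sub_dvd_hasseDeriv_pow f N a)
    have hle : (f ^ (N - a) * q).natDegree ≤ N * f.natDegree := by
      rw [hmul]
      exact (natDegree_hasseDeriv_le _ _).trans (Nat.sub_le _ _ |>.trans natDegree_pow_le)
    rw [natDegree_mul (pow_ne_zero _ hf) hq0, natDegree_pow] at hle
    have : (N - a) * f.natDegree + a * f.natDegree = N * f.natDegree := by
      rw [← add_mul, Nat.sub_add_cancel (by omega)]
    omega
  calc (f ^ (k - a) * q * hasseDeriv b g).natDegree
      ≤ (k - a) * f.natDegree + a * f.natDegree + g.natDegree :=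
        natDegree_mul_le.trans (add_le_add (natDegree_mul_le.trans
          (add_le_add natDegree_pow_le hq)) ((natDegree_hasseDeriv_le _ _).trans (Nat.sub_le _ _)))
    _ = g.natDegree + k * f.natDegree := by
      rw [← add_mul, Nat.sub_add_cancel (by omega), add_comm]

end Polynomial

theorem sum_quadraticChar_eq_card_sub_card {F α : Type*} [Field F] [Fintype F] [DecidableEq F]
    [Fintype α] (g : α → F) :
    ∑ a, quadraticChar F (g a)
      = #{a | quadraticChar F (g a) = 1} - #{a | quadraticChar F (g a) = -1} := by
  simp only [card_filter, Nat.cast_sum, Nat.cast_ite, Nat.cast_one, Nat.cast_zero,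
    ← sum_sub_distrib]
  refine sum_congr rfl fun a _ => ?_
  rcases eq_or_ne (g a) 0 with h0 | h0
  · simp [h0]
  · rcases quadraticChar_dichotomy h0 with h | h <;> simp [h]

theorem sum_prod_one_add_quadraticChar_sub {F : Type*} [Field F] [Fintype F] [DecidableEq F]
    (T : Finset F) :
    ∑ x, ∏ c ∈ T, (1 + quadraticChar F (x - c))
      = Fintype.card F
        + ∑ S ∈ T.powerset.erase ∅, ∑ x, quadraticChar F (∏ c ∈ S, (x - c)) := by
  simp only [prod_one_add, ← map_prod]
  rw [sum_comm, ← add_sum_erase _ _ (empty_mem_powerset T)]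
  simp

theorem Finset.card_image_range_add_self_le {M : Type*} [AddCommMonoid M] [DecidableEq M]
    (a d : M) (n : ℕ) :
    #((range n).image (fun i => a + i • d) + (range n).image (fun i => a + i • d))
      ≤ 2 * n - 1 := by
  refine (card_le_card (t := (range (2 * n - 1)).image fun t => a + a + t • d)
    fun x hx => ?_).trans (card_image_le.trans (card_range _).le)
  obtain ⟨_, hb, _, hc, rfl⟩ := mem_add.mp hx
  obtain ⟨i, hi, rfl⟩ := mem_image.mp hb
  obtain ⟨j, hj, rfl⟩ := mem_image.mp hc
  simp only [mem_range] at hi hj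
  exact mem_image.mpr ⟨i + j, mem_range.mpr (by omega), by rw [add_nsmul]; abel⟩

theorem Nat.two_mul_sq_mul_add_le_and_lt_thirtyTwo_pow (n : ℕ) :
    2 * (((n + 1) * 2 ^ n) ^ 2 * (2 * n + 1)) + n + 1 ≤ 32 ^ (n + 1) ∧
      6 * n * 2 ^ n < 32 ^ (n + 1) := by
  have hx : n + 1 ≤ 2 ^ n := Nat.lt_two_pow_self
  have h32 : 32 ^ (n + 1) = 32 * (2 ^ n) ^ 5 := by
    rw [← pow_mul, pow_succ, mul_comm, show (32 : ℕ) = 2 ^ 5 by norm_num, ← pow_mul,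
      mul_comm n]
  rw [h32]
  set x := 2 ^ n
  have hx5 : x ≤ x ^ 5 := Nat.le_self_pow (by norm_num) x
  have hsq : x * x ≤ x ^ 5 := by
    rw [← pow_two]; exact Nat.pow_le_pow_right (by omega) (by norm_num)
  have hmain := Nat.mul_le_mul (Nat.mul_le_mul_left 2 (Nat.pow_le_pow_left
    (Nat.mul_le_mul_right x hx) 2)) (show 2 * n + 1 ≤ 2 * x by omega)
  have h4 : 2 * (x * x) ^ 2 * (2 * x) = 4 * x ^ 5 := by ring
  have h6 := Nat.mul_le_mul_right x (show 6 * n ≤ 6 * x by omega)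
  constructor <;> nlinarith

namespace ZMod

variable {p : ℕ}

theorem natCast_injOn_range {m : ℕ} (hm : m ≤ p) :
    Set.InjOn (Nat.cast : ℕ → ZMod p) (range m) := fun i hi j hj h => by
  rw [← ZMod.val_cast_of_lt ((mem_range.mp hi).trans_le hm), h,
    ZMod.val_cast_of_lt ((mem_range.mp hj).trans_le hm)]

noncomputable def stepanovPoly (f : (ZMod p)[X]) (M : ℕ) {J : ℕ} (u v : Fin J → (ZMod p)[X]) :
    (ZMod p)[X] :=
  ∑ j : Fin J, X ^ ((j : ℕ) * p) * (f ^ M * u j + f ^ (M + p / 2) * v j)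

theorem natDegree_stepanovPoly_le (f : (ZMod p)[X]) (M : ℕ) {J D : ℕ}
    {u v : Fin J → (ZMod p)[X]} (hu : ∀ j, (u j).natDegree ≤ D)
    (hv : ∀ j, (v j).natDegree ≤ D) :
    (stepanovPoly f M u v).natDegree ≤ (J - 1) * p + (f.natDegree * (M + p / 2) + D) := by
  refine natDegree_sum_le_of_forall_le _ _ fun j _ => natDegree_mul_le.trans (add_le_add ?_ ?_)
  · exact natDegree_X_pow_le _ |>.trans (Nat.mul_le_mul_right _ (by omega))
  · refine (natDegree_add_le _ _).trans (max_le ?_ ?_) <;>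
      refine natDegree_mul_le.trans (add_le_add (natDegree_pow_le.trans ?_) (by grind))
    · rw [mul_comm]; exact Nat.mul_le_mul_left _ (by omega)
    · rw [mul_comm]

variable [Fact p.Prime]

theorem X_pow_dvd_pow_sub_C_coeff_zero (f : (ZMod p)[X]) : X ^ p ∣ f ^ p - C (f.coeff 0) := by
  rw [← ZMod.pow_card (f.coeff 0), C_pow, ← sub_pow_char]
  exact pow_dvd_pow_of_dvd X_dvd_sub_C p

theorem eq_zero_of_X_pow_dvd_add_pow_mul (hp2 : p ≠ 2) {f u v : (ZMod p)[X]} {a : ZMod p}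
    {D : ℕ} (hf0 : f.eval 0 ≠ 0) (ha : Odd (f.rootMultiplicity a))
    (hD : 2 * D + f.natDegree < p) (hu : u.natDegree ≤ D) (hv : v.natDegree ≤ D)
    (hdvd : X ^ p ∣ u + f ^ (p / 2) * v) : u = 0 ∧ v = 0 := by
  have hfp : f ^ p = f * f ^ (p / 2) * f ^ (p / 2) := by
    have hp := Nat.two_mul_div_two_add_one_of_odd ((Fact.out : p.Prime).odd_of_ne_two hp2)
    calc f ^ p = f ^ (2 * (p / 2) + 1) := by rw [hp]
      _ = _ := by ring
  have hX : X ^ p ∣ f * u ^ 2 - C (f.coeff 0) * v ^ 2 := by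
    have hsplit : f * u ^ 2 - C (f.coeff 0) * v ^ 2
        = f * (u - f ^ (p / 2) * v) * (u + f ^ (p / 2) * v) + (f ^ p - C (f.coeff 0)) * v ^ 2 := by
      rw [hfp]; ring
    rw [hsplit]
    exact dvd_add (hdvd.mul_left _) ((X_pow_dvd_pow_sub_C_coeff_zero f).mul_right _)
  have hdeg : (f * u ^ 2 - C (f.coeff 0) * v ^ 2).natDegree < (X ^ p : (ZMod p)[X]).natDegree := by
    rw [natDegree_X_pow]
    have hu2 := natDegree_pow_le (p := u) (n := 2)
    have hv2 := natDegree_pow_le (p := v) (n := 2)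
    refine (natDegree_sub_le _ _).trans_lt (max_lt ?_ ?_) <;>
      refine natDegree_mul_le.trans_lt ?_
    · omega
    · rw [natDegree_C]; omega
  exact eq_zero_of_mul_sq_eq_C_mul_sq (c := f.coeff 0) ha (by rwa [coeff_zero_eq_eval_zero])
    (sub_eq_zero.mp (eq_zero_of_dvd_of_natDegree_lt hX hdeg))

/-- On `{a | f a ^ (p / 2) = ε}` the `k`-th Hasse derivative of `stepanovPoly f M u v` is
`f ^ (M - k)` times this polynomial, whose degree, unlike that of `stepanovPoly`, does not grow
with `p`. -/
noncomputable def stepanovCofactor (f : (ZMod p)[X]) (ε : ZMod p) (M k J : ℕ) :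
    ((Fin J → (ZMod p)[X]) × (Fin J → (ZMod p)[X])) →ₗ[ZMod p] (ZMod p)[X] :=
  ∑ j : Fin J, LinearMap.mulLeft (ZMod p) (X ^ (j : ℕ)) ∘ₗ
    (hasseDerivCofactor f M k ∘ₗ LinearMap.proj j ∘ₗ LinearMap.fst _ _ _ +
      ε • hasseDerivCofactor f (M + p / 2) k ∘ₗ LinearMap.proj j ∘ₗ LinearMap.snd _ _ _)

theorem stepanovCofactor_apply (f : (ZMod p)[X]) (ε : ZMod p) (M k : ℕ) {J : ℕ}
    (u v : Fin J → (ZMod p)[X]) :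
    stepanovCofactor f ε M k J (u, v) = ∑ j : Fin J, X ^ (j : ℕ) *
      (hasseDerivCofactor f M k (u j) + C ε * hasseDerivCofactor f (M + p / 2) k (v j)) := by
  simp [stepanovCofactor, smul_eq_C_mul]

theorem eval_hasseDeriv_stepanovPoly {f : (ZMod p)[X]} (hf : f ≠ 0) {ε a : ZMod p}
    (ha : f.eval a ^ (p / 2) = ε) {M k : ℕ} (hkM : k ≤ M) (hkp : k < p) {J : ℕ}
    (u v : Fin J → (ZMod p)[X]) :
    (hasseDeriv k (stepanovPoly f M u v)).eval a
      = f.eval a ^ (M - k) * (stepanovCofactor f ε M k J (u, v)).eval a := by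
  simp only [stepanovPoly, stepanovCofactor_apply, map_sum, hasseDeriv_X_pow_mul_char_mul p _ hkp,
    map_add, hasseDeriv_pow_mul hf hkM, hasseDeriv_pow_mul hf (hkM.trans (Nat.le_add_right M _)),
    eval_finsetSum, Finset.mul_sum]
  refine Finset.sum_congr rfl fun j _ => ?_
  simp only [eval_mul, eval_add, eval_pow, eval_X, eval_C, pow_mul, ZMod.pow_card,
    show M + p / 2 - k = M - k + p / 2 by omega, pow_add, ha]
  ring

theorem natDegree_stepanovCofactor_le {f : (ZMod p)[X]} (hf : f ≠ 0) (ε : ZMod p) {M k : ℕ}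
    (hkM : k ≤ M) {J D : ℕ} {u v : Fin J → (ZMod p)[X]} (hu : ∀ j, (u j).natDegree ≤ D)
    (hv : ∀ j, (v j).natDegree ≤ D) :
    (stepanovCofactor f ε M k J (u, v)).natDegree ≤ J - 1 + (D + k * f.natDegree) := by
  rw [stepanovCofactor_apply]
  refine natDegree_sum_le_of_forall_le _ _ fun j _ => natDegree_mul_le.trans (add_le_add ?_ ?_)
  · rw [natDegree_X_pow]
    omega
  · refine (natDegree_add_le _ _).trans (max_le ?_ ?_)
    · exact (natDegree_hasseDerivCofactor_le hf hkM _).trans (by grind)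
    · refine natDegree_C_mul_le _ _ |>.trans ?_
      exact (natDegree_hasseDerivCofactor_le hf (by omega) _).trans (by grind)

theorem eq_zero_of_stepanovPoly_eq_zero (hp2 : p ≠ 2) {f : (ZMod p)[X]} {c : ZMod p}
    (hf0 : f.eval 0 ≠ 0) (hc : Odd (f.rootMultiplicity c)) {M J D : ℕ}
    (hD : 2 * D + f.natDegree < p) {u v : Fin J → (ZMod p)[X]}
    (hu : ∀ j, (u j).natDegree ≤ D) (hv : ∀ j, (v j).natDegree ≤ D)
    (h : stepanovPoly f M u v = 0) : u = 0 ∧ v = 0 := by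
  have hf : f ≠ 0 := by rintro rfl; simp at hf0
  have hblocks (j : Fin J) := eq_zero_of_X_pow_dvd_add_pow_mul hp2 hf0 hc hD (hu j) (hv j)
  have hsum : ∑ j : Fin J, X ^ ((j : ℕ) * p) * (u j + f ^ (p / 2) * v j) = 0 := by
    have hfactor : stepanovPoly f M u v
        = f ^ M * ∑ j : Fin J, X ^ ((j : ℕ) * p) * (u j + f ^ (p / 2) * v j) := by
      simp only [stepanovPoly, Finset.mul_sum, pow_add]
      exact Finset.sum_congr rfl fun j _ => by ring
    exact (mul_eq_zero.mp (hfactor ▸ h)).resolve_left (pow_ne_zero _ hf)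
  have hw := eq_zero_of_sum_X_pow_mul_eq_zero _ (fun j hj => by
    rw [(hblocks j hj).1, (hblocks j hj).2]; ring) hsum
  exact ⟨funext fun j => (hblocks j (hw j ▸ dvd_zero _)).1,
    funext fun j => (hblocks j (hw j ▸ dvd_zero _)).2⟩

theorem card_eval_pow_eq_mul_le (hp2 : p ≠ 2) {f : (ZMod p)[X]} {c : ZMod p}
    (hf0 : f.eval 0 ≠ 0) (hc : Odd (f.rootMultiplicity c)) (ε : ZMod p) {J D M : ℕ}
    (hMp : M < p) (hD : 2 * D + f.natDegree < p)
    (hdim : M * (J + D + M * f.natDegree) < 2 * J * (D + 1)) :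
    #{a | f.eval a ^ (p / 2) = ε} * M ≤ (J - 1) * p + (f.natDegree * (M + p / 2) + D) := by
  have hf : f ≠ 0 := by rintro rfl; simp at hf0
  have hJ : 0 < J := Nat.pos_of_ne_zero (by rintro rfl; simp at hdim)
  let P := Fin J → degreeLT (ZMod p) (D + 1)
  let ι : P × P →ₗ[ZMod p] (Fin J → (ZMod p)[X]) × (Fin J → (ZMod p)[X]) :=
    let incl := LinearMap.compLeft (degreeLT (ZMod p) (D + 1)).subtype (Fin J)
    incl.prodMap incl
  have hdegLT (q : degreeLT (ZMod p) (D + 1)) : (q : (ZMod p)[X]).natDegree ≤ D :=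
    natDegree_le_of_degree_le (Order.le_of_lt_succ (by exact_mod_cast mem_degreeLT.mp q.2))
  have hfinrank : finrank (ZMod p) (P × P) = 2 * J * (D + 1) := by
    simp [P, finrank_prod, finrank_pi_fintype, finrank_degreeLT]
    ring
  obtain ⟨x, hx0, hx⟩ := exists_ne_zero_forall_eq_zero_of_natDegree_lt
    (fun k : Fin M => stepanovCofactor f ε M k J ∘ₗ ι) (E := J + D + M * f.natDegree)
    (fun k x => by
      refine (natDegree_stepanovCofactor_le hf ε k.2.le (fun j => hdegLT (x.1 j))
        (fun j => hdegLT (x.2 j))).trans_lt ?_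
      have := Nat.mul_le_mul_right f.natDegree k.2.le
      omega)
    (hfinrank ▸ hdim)
  have hF : stepanovPoly f M (ι x).1 (ι x).2 ≠ 0 := fun h => hx0 <| by
    obtain ⟨hu, hv⟩ := eq_zero_of_stepanovPoly_eq_zero hp2 hf0 hc hD
      (fun j => hdegLT (x.1 j)) (fun j => hdegLT (x.2 j)) h
    exact Prod.ext (funext fun j => Subtype.ext (congrFun hu j))
      (funext fun j => Subtype.ext (congrFun hv j))
  refine (card_mul_le_natDegree_of_pow_dvd hF _ fun a ha =>
    pow_dvd_of_hasseDeriv_eval_eq_zero fun k hk => ?_).trans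
    (natDegree_stepanovPoly_le f M (fun j => hdegLT (x.1 j)) (fun j => hdegLT (x.2 j)))
  have hxk : stepanovCofactor f ε M k J (ι x) = 0 := hx ⟨k, hk⟩
  rw [eval_hasseDeriv_stepanovPoly hf (mem_filter.mp ha).2 hk.le (hk.trans hMp), hxk, eval_zero,
    mul_zero]

theorem card_quadraticChar_eval_eq_mul_le (hp2 : p ≠ 2) {f : (ZMod p)[X]} {c : ZMod p}
    (hf0 : f.eval 0 ≠ 0) (hc : Odd (f.rootMultiplicity c)) (ε : ℤ) {J D M : ℕ}
    (hMp : M < p) (hD : 2 * D + f.natDegree < p)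
    (hdim : M * (J + D + M * f.natDegree) < 2 * J * (D + 1)) :
    #{a | quadraticChar (ZMod p) (f.eval a) = ε} * M
      ≤ (J - 1) * p + (f.natDegree * (M + p / 2) + D) := by
  refine (Nat.mul_le_mul_right M (card_le_card fun a ha => ?_)).trans
    (card_eval_pow_eq_mul_le hp2 hf0 hc ε hMp hD hdim)
  simp only [mem_filter, mem_univ, true_and] at ha ⊢
  rw [← ha]
  simpa using (quadraticChar_eq_pow_of_char_ne_two' (F := ZMod p) (by rwa [ZMod.ringChar_zmod_n])
    (f.eval a)).symm

theorem abs_sum_quadraticChar_eval_le (hp2 : p ≠ 2) {f : (ZMod p)[X]} {c : ZMod p}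
    (hf0 : f.eval 0 ≠ 0) (hc : Odd (f.rootMultiplicity c)) {K : ℕ}
    (hK : K ^ 2 * (2 * f.natDegree + 1) ≤ (p - f.natDegree - 1) / 2) :
    2 * K * |∑ a, quadraticChar (ZMod p) (f.eval a)|
      ≤ (f.natDegree + 1) * p + 6 * K * f.natDegree := by
  set m := f.natDegree
  set D := (p - m - 1) / 2
  have hf : f ≠ 0 := by rintro rfl; simp at hf0
  rcases Nat.eq_zero_or_pos K with rfl | hK0
  · simp only [CharP.cast_eq_zero, mul_zero, zero_mul, add_zero]
    positivity
  have hD : 2 * D + m + 1 ≤ p := by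
    have : 0 < K ^ 2 * (2 * m + 1) := by positivity
    omega
  have hKD : K ≤ D := by nlinarith
  have hlevel (ε : ℤ) := card_quadraticChar_eval_eq_mul_le hp2 hf0 hc ε (J := K + 1) (D := D)
    (M := 2 * K) (by omega) (by omega) (by nlinarith)
  set Spos : Finset (ZMod p) := {a | quadraticChar (ZMod p) (f.eval a) = 1}
  set Sneg : Finset (ZMod p) := {a | quadraticChar (ZMod p) (f.eval a) = -1}
  have hcover : p ≤ #Spos + #Sneg + m :=
    calc p = #(univ : Finset (ZMod p)) := by simp
      _ ≤ #(Spos ∪ Sneg ∪ ({a | f.eval a = 0} : Finset (ZMod p))) :=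
        card_le_card fun a _ => by
          rcases eq_or_ne (f.eval a) 0 with h0 | h0
          · simp [h0]
          · rcases quadraticChar_dichotomy h0 with h | h <;>
              simp only [Spos, Sneg, mem_union, mem_filter, mem_univ, true_and, h, true_or, or_true]
      _ ≤ _ := (card_union_le _ _).trans (add_le_add (card_union_le _ _)
        (card_le_degree_of_subset_roots fun a ha => by simpa [mem_roots hf] using ha))
  have hp : 2 * (p / 2) + 1 = p :=
    Nat.two_mul_div_two_add_one_of_odd ((Fact.out : p.Prime).odd_of_ne_two hp2)
  have hplus := hlevel 1
  have hminus := hlevel (-1)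
  rw [sum_quadraticChar_eq_card_sub_card, ← abs_of_nonneg (by positivity : (0 : ℤ) ≤ 2 * K),
    ← abs_mul, abs_le]
  simp only [Nat.add_sub_cancel] at hplus hminus
  zify at hplus hminus hcover hp hD
  have hcoverK := mul_le_mul_of_nonneg_left hcover (by positivity : (0 : ℤ) ≤ 2 * K)
  have hpm := congrArg ((m : ℤ) * ·) hp
  constructor <;> nlinarith

theorem abs_sum_quadraticChar_prod_sub_le (hp2 : p ≠ 2) {S : Finset (ZMod p)} (hS : S.Nonempty)
    (hS0 : 0 ∉ S) {K n : ℕ} (hSn : #S ≤ n) (hK : 2 * (K ^ 2 * (2 * n + 1)) + n + 1 ≤ p) :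
    2 * K * |∑ x, quadraticChar (ZMod p) (∏ c ∈ S, (x - c))| ≤ (n + 1) * p + 6 * K * n := by
  obtain ⟨c, hc⟩ := hS
  have hroot : (∏ c ∈ S, (X - C c)).rootMultiplicity c = 1 := by
    rw [← count_roots, roots_prod_X_sub_C]
    exact Multiset.count_eq_one_of_mem S.nodup hc
  have h0 : (∏ c ∈ S, (X - C c)).eval 0 ≠ 0 := by
    simp only [eval_prod, eval_sub, eval_X, eval_C, zero_sub, prod_ne_zero_iff, neg_ne_zero]
    exact fun a ha h => hS0 (h ▸ ha)
  have hKS : K ^ 2 * (2 * #S + 1) ≤ (p - #S - 1) / 2 := by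
    have := Nat.mul_le_mul_left (K ^ 2) (show 2 * #S + 1 ≤ 2 * n + 1 by omega)
    omega
  have hbound := abs_sum_quadraticChar_eval_le hp2 h0 (hroot ▸ odd_one) (by simpa using hKS)
  simp only [eval_prod, eval_sub, eval_X, eval_C, natDegree_finsetProd_X_sub_C_eq_card] at hbound
  refine hbound.trans ?_
  have : (#S : ℤ) ≤ n := by exact_mod_cast hSn
  gcongr

theorem exists_forall_isSquare_sub {T : Finset (ZMod p)} (hT0 : 0 ∉ T)
    (hp : 32 ^ (#T + 1) ≤ p) : ∃ x, ∀ c ∈ T, IsSquare (x - c) := by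
  set n := #T
  set K := (n + 1) * 2 ^ n
  obtain ⟨hpK, hpn⟩ := (Nat.two_mul_sq_mul_add_le_and_lt_thirtyTwo_pow n).imp
    (·.trans hp) (·.trans_le hp)
  have hp2 : p ≠ 2 := by
    have : 32 ≤ 32 ^ (n + 1) := Nat.le_self_pow (by omega) 32
    omega
  set G : Finset (ZMod p) → ℤ := fun S => ∑ x, quadraticChar (ZMod p) (∏ c ∈ S, (x - c))
  have hG (S) (hS : S ∈ T.powerset.erase ∅) : |2 * K * G S| ≤ (n + 1) * p + 6 * K * n := by
    obtain ⟨hSne, hST⟩ := mem_erase.mp hS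
    rw [abs_mul, abs_of_nonneg (by positivity)]
    exact abs_sum_quadraticChar_prod_sub_le hp2 (nonempty_iff_ne_empty.mpr hSne)
      (fun h => hT0 (mem_powerset.mp hST h)) (card_le_card (mem_powerset.mp hST)) hpK
  have hsum :
      |∑ S ∈ T.powerset.erase ∅, 2 * K * G S| ≤ 2 ^ n * ((n + 1) * p + 6 * K * n) := by
    have hcard : ((T.powerset.erase ∅).card : ℤ) ≤ 2 ^ n := by
      exact_mod_cast (card_erase_le).trans (card_powerset T).le
    refine (abs_sum_le_sum_abs _ _).trans ((sum_le_card_nsmul _ _ _ hG).trans ?_)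
    rw [nsmul_eq_mul]
    gcongr
  have hK : (2 : ℤ) ^ n * ((n + 1) * p + 6 * K * n) < 2 * K * p := by
    have h := mul_lt_mul_of_pos_left (show (6 * n * 2 ^ n : ℤ) < p by exact_mod_cast hpn)
      (by positivity : (0 : ℤ) < (n + 1) * 2 ^ n)
    simp only [K]
    push_cast
    linarith
  have hpos : 0 < ∑ x, ∏ c ∈ T, (1 + quadraticChar (ZMod p) (x - c)) := by
    rw [sum_prod_one_add_quadraticChar_sub, ZMod.card,
      ← mul_lt_mul_iff_of_pos_left (by positivity : (0 : ℤ) < 2 * K), mul_zero, mul_add,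
      mul_sum]
    linarith [neg_abs_le (∑ S ∈ T.powerset.erase ∅, 2 * K * G S)]
  obtain ⟨x, -, hx⟩ := exists_ne_zero_of_sum_ne_zero hpos.ne'
  refine ⟨x, fun c hc => ?_⟩
  by_contra hsq
  exact hx (prod_eq_zero hc (by rw [quadraticChar_neg_one_iff_not_isSquare.mpr hsq]; ring))

theorem exists_forall_isSquare_add_natCast {n : ℕ} (hp : 32 ^ (n + 1) ≤ p) :
    ∃ x : ZMod p, ∀ i < n, IsSquare (x + i) := by
  have hnp : n + 1 < p := (Nat.lt_pow_self (by norm_num)).trans_le hp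
  set T := (range n).image fun i : ℕ => -((i + 1 : ℕ) : ZMod p)
  have hinj : Set.InjOn (fun i : ℕ => -((i + 1 : ℕ) : ZMod p)) (range n) := fun i hi j hj h =>
    Nat.succ_injective <| natCast_injOn_range hnp.le (by simp at hi ⊢; omega)
      (by simp at hj ⊢; omega) (neg_inj.mp h)
  have hT0 : 0 ∉ T := by
    simp only [T, mem_image, mem_range, neg_eq_zero, not_exists, not_and]
    intro i hi h
    rw [ZMod.natCast_eq_zero_iff] at h
    exact absurd (Nat.le_of_dvd (by omega) h) (by omega)
  have hT : #T = n := by rw [card_image_of_injOn hinj, card_range]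
  obtain ⟨y, hy⟩ := exists_forall_isSquare_sub hT0 (hT ▸ hp)
  refine ⟨y + 1, fun i hi => ?_⟩
  have := hy _ (mem_image_of_mem _ (mem_range.mpr hi))
  rwa [Nat.cast_succ, sub_neg_eq_add, ← add_assoc, add_right_comm] at this

theorem exists_isSquare_card_eq_card_add_self_le {n : ℕ} (hp : 32 ^ (n + 1) ≤ p) :
    ∃ A : Finset (ZMod p), (∀ a ∈ A, IsSquare a) ∧ #A = n ∧ #(A + A) ≤ 2 * n - 1 := by
  have hnp : n < p := (Nat.lt_pow_self (by norm_num)).trans_le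
    ((Nat.pow_le_pow_right (by norm_num) n.le_succ).trans hp)
  obtain ⟨x, hx⟩ := exists_forall_isSquare_add_natCast hp
  refine ⟨(range n).image fun i => x + i • (1 : ZMod p), by simpa using hx, ?_,
    card_image_range_add_self_le x 1 n⟩
  refine (card_image_of_injOn fun i hi j hj h => ?_).trans (card_range n)
  exact natCast_injOn_range hnp.le hi hj (by simpa using h)

theorem min_le_card_add_self (B : Finset (ZMod p)) :
    min p (2 * #B - 1) ≤ #(B + B) := by
  rcases B.eq_empty_or_nonempty with rfl | hB
  · simp
  · simpa [two_mul] using ZMod.cauchy_davenport Fact.out hB hB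

end ZMod

theorem sqSumsetMin_zmod_large_prime_general (n : ℕ) (p : ℕ) (hp : p.Prime)
    (hlarge : 2 ^ 2 ^ 2 ^ 2 ^ 2 ^ (9 + n) < p) :
    sqSumsetMin (ZMod p) n = 2 * n - 1 := by
  have := Fact.mk hp
  have hp32 : 32 ^ (n + 1) ≤ p := by
    have h : 5 * (n + 1) < 2 ^ (9 + n) := by
      have := Nat.lt_two_pow_self (n := n)
      rw [pow_add]; omega
    calc 32 ^ (n + 1) = 2 ^ (5 * (n + 1)) := by rw [pow_mul]; norm_num
      _ ≤ 2 ^ 2 ^ 2 ^ 2 ^ 2 ^ (9 + n) := Nat.pow_le_pow_right two_pos (h.trans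
          (Nat.lt_two_pow_self.trans (Nat.lt_two_pow_self.trans Nat.lt_two_pow_self))).le
      _ ≤ p := hlarge.le
  have hnp : 2 * n < p := by
    have := Nat.lt_pow_self (n := n) (show 1 < 32 by norm_num)
    rw [pow_succ] at hp32; omega
  obtain ⟨A, hAsq, hAcard, hAA⟩ := ZMod.exists_isSquare_card_eq_card_add_self_le hp32
  have hmem : #(A + A) ∈ {k | ∃ A : Finset (ZMod p), (∀ a ∈ A, IsSquare a) ∧ A.card = n ∧
      (A + A).card = k} := ⟨A, hAsq, hAcard, rfl⟩
  refine le_antisymm ((Nat.sInf_le hmem).trans hAA) (le_csInf ⟨_, hmem⟩ ?_)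
  rintro _ ⟨B, -, rfl, rfl⟩
  have := ZMod.min_le_card_add_self B
  omega

/-- For `n ≥ 3` and a prime `p > 2^(2^(2^(2^(2^(9+n)))))`, we have `N_n(ℤ_p) = 2n - 1`. -/
theorem sqSumsetMin_zmod_large_prime (n : ℕ) (hn : 3 ≤ n) (p : ℕ) (hp : p.Prime)
    (hlarge : 2 ^ 2 ^ 2 ^ 2 ^ 2 ^ (9 + n) < p) :
    sqSumsetMin (ZMod p) n = 2 * n - 1 :=
  sqSumsetMin_zmod_large_prime_general n p hp hlarge
end
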